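/- arXiv:0805.1130 — 10 statements merged into one kernel-verified Lean document; each statement's English description precedes it below -/
import Mathlib

section
/- For every player-specific congestion game on a tree, the transition graph is acyclic; in particular, the best response dynamics cannot cycle. -/
/-- States compatible with strategy sets `strat`. -/
abbrev GameState {N : ℕ} {R : Type} (strat : Fin N → Finset R) :=
  {S : Fin N → R // ∀ i, S i ∈ strat i}

/-- The congestion `n_r(S)`: the number of players allocating resource `r` in state `S`. -/
def congOf {N : ℕ} {R : Type} [Fintype R] [DecidableEq R] {strat : Fin N → Finset R}
    (S : GameState strat) (r : R) : ℕ :=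
  (Finset.univ.filter fun i => S.1 i = r).card

/-- The current resource of player `i` is a best response to `S`
(w.r.t. strategy sets `strat` and delay functions `d`). -/
def CurrentBROf {N : ℕ} {R : Type} [Fintype R] [DecidableEq R]
    (strat : Fin N → Finset R) (d : Fin N → R → ℕ → ℕ)
    (S : GameState strat) (i : Fin N) : Prop :=
  ∀ r' ∈ strat i, r' ≠ S.1 i →
    d i (S.1 i) (congOf S (S.1 i)) ≤ d i r' (congOf S r' + 1)

/-- `S'` is obtained from `S` by a best-response step of player `i`:
player `i`'s current resource is not a best response, player `i` switches to a
best response, and all other players keep their resources. -/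
def StepBy {N : ℕ} {R : Type} [Fintype R] [DecidableEq R]
    (strat : Fin N → Finset R) (d : Fin N → R → ℕ → ℕ) (i : Fin N)
    (S S' : GameState strat) : Prop :=
  ¬ CurrentBROf strat d S i ∧
  S'.1 i ≠ S.1 i ∧
  (∀ r' ∈ strat i, r' ≠ S.1 i →
    d i (S'.1 i) (congOf S (S'.1 i) + 1) ≤ d i r' (congOf S r' + 1)) ∧
  d i (S'.1 i) (congOf S (S'.1 i) + 1) ≤ d i (S.1 i) (congOf S (S.1 i)) ∧
  (∀ j, j ≠ i → S'.1 j = S.1 j)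

/-- A player-specific singleton congestion game with `N` players and resources `R`:
strategy sets `strat i ⊆ R`, strictly increasing player-specific delay functions
`d i r`, with ties broken (for each player, the delays `d i r k`, `r ∈ strat i`,
`1 ≤ k ≤ N`, are pairwise distinct). -/
structure PSGame (N : ℕ) (R : Type) [Fintype R] [DecidableEq R] where
  strat : Fin N → Finset R
  d : Fin N → R → ℕ → ℕ
  mono : ∀ i r, StrictMono (d i r)
  tie : ∀ i : Fin N, ∀ r ∈ strat i, ∀ r' ∈ strat i, ∀ k, 1 ≤ k → k ≤ N →
    ∀ k', 1 ≤ k' → k' ≤ N → (r ≠ r' ∨ k ≠ k') → d i r k ≠ d i r' k'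

namespace PSGame

variable {N : ℕ} {R : Type} [Fintype R] [DecidableEq R]

abbrev State (G : PSGame N R) := GameState G.strat

/-- One best-response step of the game `G` (an edge of the transition graph `TG(G)`). -/
def Step (G : PSGame N R) (S S' : G.State) : Prop :=
  ∃ i, StepBy G.strat G.d i S S'

/-- The multigraph of the game, viewed as a simple graph: resources are nodes and
two resources are adjacent iff some player has exactly these two as strategy set. -/
def graph (G : PSGame N R) : SimpleGraph R :=
  SimpleGraph.fromRel fun r r' => ∃ i, G.strat i = {r, r'}

/-- `G` is a player-specific congestion game on a tree: every player chooses between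
exactly two resources, distinct players correspond to distinct edges (no multi-edges),
and the resulting graph on the resources is a tree. -/
def OnTree (G : PSGame N R) : Prop :=
  (∀ i, (G.strat i).card = 2) ∧ Function.Injective G.strat ∧ G.graph.IsTree

end PSGame


namespace TreeAcyclicAux

open SimpleGraph


open Finset

/-- The count of parent-levels below the child value. -/
def scount (N : ℕ) (dp dv : ℕ → ℕ) (β : ℕ) : ℕ :=
  ((Finset.range N).filter (fun α => dp (α + 1) < dv (β + 1))).card

/-- Interpolated child sequence. -/
noncomputable def sfun (N : ℕ) (Gp : ℕ → ℚ) (dp dv : ℕ → ℕ) (β : ℕ) : ℚ :=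
  (if scount N dp dv β = 0 then Gp 0 - 1 else Gp (scount N dp dv β - 1)) +
  ((if scount N dp dv β = N then Gp (N - 1) + 1 else Gp (scount N dp dv β)) -
   (if scount N dp dv β = 0 then Gp 0 - 1 else Gp (scount N dp dv β - 1))) * (β + 1) / (N + 1)

section lemmas

variable {N : ℕ} {Gp : ℕ → ℚ} {dp dv : ℕ → ℕ}

lemma scount_le (β : ℕ) : scount N dp dv β ≤ N := by
  classical
  calc ((Finset.range N).filter (fun α => dp (α + 1) < dv (β + 1))).card
      ≤ (Finset.range N).card := Finset.card_filter_le _ _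
    _ = N := Finset.card_range N

lemma hGple (hGp : ∀ a b, a < b → b < N → Gp a < Gp b) :
    ∀ a b, a ≤ b → b < N → Gp a ≤ Gp b := by
  intro a b hab hb
  rcases lt_or_eq_of_le hab with h | h
  · exact le_of_lt (hGp a b h hb)
  · rw [h]

lemma A_lt_B (hGp : ∀ a b, a < b → b < N → Gp a < Gp b) (β : ℕ) :
    (if scount N dp dv β = 0 then Gp 0 - 1 else Gp (scount N dp dv β - 1)) <
    (if scount N dp dv β = N then Gp (N - 1) + 1 else Gp (scount N dp dv β)) := by
  set s := scount N dp dv β with hs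
  have hsle : s ≤ N := scount_le β
  by_cases h0 : s = 0
  · by_cases hN : s = N
    · rw [if_pos h0, if_pos hN]
      have hN0 : N = 0 := by omega
      subst hN0
      norm_num
      linarith
    · rw [if_pos h0, if_neg hN]
      have : Gp 0 ≤ Gp s := hGple hGp 0 s (by omega) (by omega)
      linarith
  · by_cases hN : s = N
    · rw [if_neg h0, if_pos hN]
      have : Gp (s-1) ≤ Gp (N-1) := hGple hGp (s-1) (N-1) (by omega) (by omega)
      linarith
    · rw [if_neg h0, if_neg hN]
      exact hGp (s-1) s (by omega) (by omega)

lemma frac_pos (β : ℕ) : (0:ℚ) < (β + 1) / (N + 1) := by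
  apply div_pos <;> positivity

lemma frac_lt_one {β : ℕ} (hβ : β < N) : ((β:ℚ) + 1) / (N + 1) < 1 := by
  rw [div_lt_one (by positivity)]
  have : (β:ℚ) < N := by exact_mod_cast hβ
  linarith

lemma sfun_gt_A (hGp : ∀ a b, a < b → b < N → Gp a < Gp b) (β : ℕ) :
    (if scount N dp dv β = 0 then Gp 0 - 1 else Gp (scount N dp dv β - 1)) <
    sfun N Gp dp dv β := by
  have hAB := A_lt_B (dp := dp) (dv := dv) hGp β
  have hf := frac_pos (N := N) β
  unfold sfun
  rw [mul_div_assoc]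
  nlinarith

lemma sfun_lt_B (hGp : ∀ a b, a < b → b < N → Gp a < Gp b) {β : ℕ} (hβ : β < N) :
    sfun N Gp dp dv β <
    (if scount N dp dv β = N then Gp (N - 1) + 1 else Gp (scount N dp dv β)) := by
  have hAB := A_lt_B (dp := dp) (dv := dv) hGp β
  have hf := frac_lt_one (N := N) hβ
  have hf0 := frac_pos (N := N) β
  unfold sfun
  rw [mul_div_assoc]
  nlinarith

lemma scount_mono (hdv : StrictMono dv) {β β' : ℕ} (h : β ≤ β') :
    scount N dp dv β ≤ scount N dp dv β' := by
  classical
  apply Finset.card_le_card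
  intro α hα
  simp only [scount, Finset.mem_filter] at *
  exact ⟨hα.1, lt_of_lt_of_le hα.2 (hdv.le_iff_le.mpr (by omega))⟩

lemma ge_scount_of (hdp : StrictMono dp) {α β : ℕ} (hα : α < N)
    (h : dp (α + 1) < dv (β + 1)) : α + 1 ≤ scount N dp dv β := by
  classical
  have : Finset.range (α + 1) ⊆ (Finset.range N).filter (fun α' => dp (α' + 1) < dv (β + 1)) := by
    intro x hx
    rw [Finset.mem_range] at hx
    rw [Finset.mem_filter, Finset.mem_range]
    constructor
    · omega
    · exact lt_of_le_of_lt (hdp.le_iff_le.mpr (by omega)) h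
  calc α + 1 = (Finset.range (α+1)).card := (Finset.card_range _).symm
    _ ≤ _ := Finset.card_le_card this

lemma le_scount_of (hdp : StrictMono dp) {α β : ℕ}
    (h : dv (β + 1) < dp (α + 1)) : scount N dp dv β ≤ α := by
  classical
  have : (Finset.range N).filter (fun α' => dp (α' + 1) < dv (β + 1)) ⊆ Finset.range α := by
    intro x hx
    rw [Finset.mem_filter] at hx
    rw [Finset.mem_range]
    have : dp (x+1) < dp (α+1) := lt_trans hx.2 h
    have := hdp.lt_iff_lt.mp this
    omega
  calc scount N dp dv β ≤ (Finset.range α).card := Finset.card_le_card this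
    _ = α := Finset.card_range _

/-- key 1: if the parent value is below the child value then `Gp α < sfun β`. -/
lemma sfun_S2 (hGp : ∀ a b, a < b → b < N → Gp a < Gp b) (hdp : StrictMono dp)
    {α β : ℕ} (hα : α < N) (h : dp (α + 1) < dv (β + 1)) :
    Gp α < sfun N Gp dp dv β := by
  have hs : α + 1 ≤ scount N dp dv β := ge_scount_of hdp hα h
  have hsle : scount N dp dv β ≤ N := scount_le β
  have hA : Gp α ≤ (if scount N dp dv β = 0 then Gp 0 - 1 else Gp (scount N dp dv β - 1)) := by
    rw [if_neg (by omega)]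
    exact hGple hGp α (scount N dp dv β - 1) (by omega) (by omega)
  exact lt_of_le_of_lt hA (sfun_gt_A hGp β)

/-- key 2: if the child value is below the parent value then `sfun β < Gp α`. -/
lemma sfun_S3 (hGp : ∀ a b, a < b → b < N → Gp a < Gp b) (hdp : StrictMono dp)
    {α β : ℕ} (hα : α < N) (hβ : β < N) (h : dv (β + 1) < dp (α + 1)) :
    sfun N Gp dp dv β < Gp α := by
  have hs : scount N dp dv β ≤ α := le_scount_of hdp h
  have hB : (if scount N dp dv β = N then Gp (N - 1) + 1 else Gp (scount N dp dv β)) ≤ Gp α := by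
    rw [if_neg (by omega)]
    exact hGple hGp (scount N dp dv β) α hs hα
  exact lt_of_lt_of_le (sfun_lt_B hGp hβ) hB

/-- monotonicity of the interpolated sequence. -/
lemma sfun_mono (hGp : ∀ a b, a < b → b < N → Gp a < Gp b) (hdv : StrictMono dv)
    {β β' : ℕ} (hββ' : β < β') (hβ' : β' < N) :
    sfun N Gp dp dv β < sfun N Gp dp dv β' := by
  have hsm : scount N dp dv β ≤ scount N dp dv β' := scount_mono hdv (le_of_lt hββ')
  rcases lt_or_eq_of_le hsm with hlt | heq
  · -- sfun β < B_β ≤ A_β' < sfun β'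
    have h1 : sfun N Gp dp dv β <
        (if scount N dp dv β = N then Gp (N - 1) + 1 else Gp (scount N dp dv β)) :=
      sfun_lt_B hGp (by omega)
    have h2 : (if scount N dp dv β' = 0 then Gp 0 - 1 else Gp (scount N dp dv β' - 1)) <
        sfun N Gp dp dv β' := sfun_gt_A hGp β'
    have hsle' : scount N dp dv β' ≤ N := scount_le β'
    have h3 : (if scount N dp dv β = N then Gp (N - 1) + 1 else Gp (scount N dp dv β)) ≤
        (if scount N dp dv β' = 0 then Gp 0 - 1 else Gp (scount N dp dv β' - 1)) := by
      rw [if_neg (by omega), if_neg (by omega)]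
      exact hGple hGp _ _ (by omega) (by omega)
    linarith
  · -- same slot, compare fractions
    have hAB := A_lt_B (dp := dp) (dv := dv) hGp β
    unfold sfun
    rw [← heq]
    rw [mul_div_assoc, mul_div_assoc]
    have hfrac : ((β:ℚ) + 1)/(N+1) < ((β':ℚ)+1)/(N+1) := by
      rw [div_lt_div_iff₀ (by positivity) (by positivity)]
      have h1 : ((β:ℚ) + 1) < (β':ℚ) + 1 := by
        have : (β:ℚ) < (β':ℚ) := by exact_mod_cast hββ'
        linarith
      nlinarith [h1]
    have hmul := mul_lt_mul_of_pos_left hfrac (show (0:ℚ) <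
      (if scount N dp dv β = N then Gp (N - 1) + 1 else Gp (scount N dp dv β)) -
      (if scount N dp dv β = 0 then Gp 0 - 1 else Gp (scount N dp dv β - 1)) by linarith)
    linarith

end lemmas


open SimpleGraph

variable {R : Type} [DecidableEq R] {Γ : SimpleGraph R} (ht : Γ.IsTree)

noncomputable def root : R := Classical.choice ht.isConnected.nonempty

noncomputable def pathTo (v : R) : Γ.Path (root ht) v :=
  ⟨(Classical.choice (ht.isConnected.preconnected (root ht) v)).bypass,
   SimpleGraph.Walk.bypass_isPath _⟩

noncomputable def depth (v : R) : ℕ := (pathTo ht v).1.length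

lemma pathTo_root : (pathTo ht (root ht)).1 = Walk.nil := by
  have : pathTo ht (root ht) = ⟨Walk.nil, Walk.IsPath.nil⟩ :=
    ht.IsAcyclic.path_unique _ _
  rw [this]

lemma exists_parent (v : R) (hv : v ≠ root ht) :
    ∃ (u : R) (h : Γ.Adj u v), (pathTo ht v).1 = ((pathTo ht u).1).concat h := by
  have hnil : ¬ (pathTo ht v).1.Nil := Walk.not_nil_of_ne (Ne.symm hv)
  have hnilr : ¬ (pathTo ht v).1.reverse.Nil := by
    rw [Walk.not_nil_iff_lt_length, Walk.length_reverse]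
    rw [Walk.not_nil_iff_lt_length] at hnil
    exact hnil
  obtain ⟨u, hadj, q, hq⟩ := Walk.not_nil_iff.mp hnilr
  refine ⟨u, hadj.symm, ?_⟩
  have hval : (pathTo ht v).1 = q.reverse.concat hadj.symm := by
    have := congrArg Walk.reverse hq
    rw [Walk.reverse_reverse] at this
    rw [this, Walk.reverse_cons, ← Walk.concat_eq_append]
  -- q.reverse is a path from root to u, hence equals pathTo u
  have hqpath : q.reverse.IsPath := by
    have hp : ((pathTo ht v).1).IsPath := (pathTo ht v).2
    rw [hval] at hp
    rw [Walk.concat_eq_append] at hp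
    exact hp.of_append_left
  have : (⟨q.reverse, hqpath⟩ : Γ.Path (root ht) u) = pathTo ht u :=
    ht.IsAcyclic.path_unique _ _
  rw [hval, ← this]

noncomputable def par (v : R) : R :=
  if h : v = root ht then v else (exists_parent ht v h).choose

lemma par_adj (v : R) (hv : v ≠ root ht) : Γ.Adj (par ht v) v := by
  rw [par, dif_neg hv]
  exact (exists_parent ht v hv).choose_spec.choose

lemma par_spec (v : R) (hv : v ≠ root ht) :
    ∃ h : Γ.Adj (par ht v) v, (pathTo ht v).1 = ((pathTo ht (par ht v)).1).concat h := by
  rw [par, dif_neg hv]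
  exact (exists_parent ht v hv).choose_spec

lemma depth_par (v : R) (hv : v ≠ root ht) : depth ht (par ht v) + 1 = depth ht v := by
  obtain ⟨h, hspec⟩ := par_spec ht v hv
  rw [depth, depth, hspec, Walk.length_concat]

/-- Key structural lemma: one endpoint of an edge is the parent of the other. -/
lemma adj_par {u v : R} (hadj : Γ.Adj u v) :
    (∃ _ : v ≠ root ht, par ht v = u) ∨ (∃ _ : u ≠ root ht, par ht u = v) := by
  classical
  by_cases hvs : v ∈ (pathTo ht u).1.support
  · -- v is on the path to u; the path to u ends with the edge v-u
    right
    set P := (pathTo ht u).1 with hP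
    have hPp : P.IsPath := (pathTo ht u).2
    have hQ : (P.takeUntil v hvs).IsPath := hPp.takeUntil hvs
    have hD : (P.dropUntil v hvs).IsPath := hPp.dropUntil hvs
    have hE : (Walk.cons hadj.symm Walk.nil : Γ.Walk v u).IsPath := by
      rw [Walk.cons_isPath_iff]
      refine ⟨Walk.IsPath.nil, ?_⟩
      simp [hadj.ne']
    have hDE : P.dropUntil v hvs = Walk.cons hadj.symm Walk.nil := by
      have := ht.IsAcyclic.path_unique (⟨_, hD⟩ : Γ.Path v u) ⟨_, hE⟩
      exact congrArg Subtype.val this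
    have hdecomp : P = (P.takeUntil v hvs).concat hadj.symm := by
      conv_lhs => rw [← Walk.take_spec P hvs]
      rw [hDE, Walk.concat_eq_append]
    have hu : u ≠ root ht := by
      intro h
      subst h
      have hPnil : P = Walk.nil := pathTo_root ht
      have hlen := congrArg Walk.length hdecomp
      rw [Walk.length_concat] at hlen
      have h0 : P.length = 0 := by rw [hPnil]; rfl
      omega
    refine ⟨hu, ?_⟩
    obtain ⟨h2, hspec⟩ := par_spec ht u hu
    rw [← hP] at hspec
    rw [hdecomp] at hspec
    obtain ⟨hv2, -⟩ := Walk.concat_inj hspec.symm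
    exact hv2
  · -- v is not on the path to u: path to v = path to u + edge
    left
    have hvroot : v ≠ root ht := by
      intro h; subst h
      exact hvs ((pathTo ht u).1.start_mem_support)
    have hW : ((pathTo ht u).1.concat hadj).IsPath := by
      rw [← Walk.isPath_reverse_iff, Walk.reverse_concat, Walk.cons_isPath_iff]
      refine ⟨((pathTo ht u).2).reverse, ?_⟩
      rw [Walk.support_reverse]
      simpa using hvs
    have huniq : (pathTo ht v).1 = (pathTo ht u).1.concat hadj := by
      have := ht.IsAcyclic.path_unique (pathTo ht v) ⟨_, hW⟩
      exact congrArg Subtype.val this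
    refine ⟨hvroot, ?_⟩
    obtain ⟨h2, hspec⟩ := par_spec ht v hvroot
    rw [huniq] at hspec
    obtain ⟨hv2, -⟩ := Walk.concat_inj hspec.symm
    exact hv2


section GmConstruction

variable {N : ℕ} {R : Type} [Fintype R] [DecidableEq R]

lemma exists_player (G : PSGame N R) {u v : R} (hadj : G.graph.Adj u v) :
    ∃ i, G.strat i = {u, v} := by
  rw [PSGame.graph, SimpleGraph.fromRel_adj] at hadj
  rcases hadj.2 with ⟨i, hi⟩ | ⟨i, hi⟩
  · exact ⟨i, hi⟩
  · exact ⟨i, by rw [hi, Finset.pair_comm]⟩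

noncomputable def pl (G : PSGame N R) (ht : G.graph.IsTree) (v : R)
    (hv : v ≠ root ht) : Fin N :=
  (exists_player G (par_adj ht v hv)).choose

lemma pl_spec (G : PSGame N R) (ht : G.graph.IsTree) (v : R) (hv : v ≠ root ht) :
    G.strat (pl G ht v hv) = {par ht v, v} :=
  (exists_player G (par_adj ht v hv)).choose_spec

noncomputable def Gm (G : PSGame N R) (ht : G.graph.IsTree) (v : R) : ℕ → ℚ :=
  if h : v = root ht then fun β : ℕ => (β : ℚ)
  else sfun N (Gm G ht (par ht v)) (G.d (pl G ht v h) (par ht v)) (G.d (pl G ht v h) v)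
termination_by depth ht v
decreasing_by
  have := depth_par ht v h
  omega

lemma Gm_eq (G : PSGame N R) (ht : G.graph.IsTree) (v : R) (hv : v ≠ root ht) :
    Gm G ht v = sfun N (Gm G ht (par ht v)) (G.d (pl G ht v hv) (par ht v))
      (G.d (pl G ht v hv) v) := by
  rw [Gm, dif_neg hv]

lemma Gm_root (G : PSGame N R) (ht : G.graph.IsTree) :
    Gm G ht (root ht) = fun β : ℕ => (β : ℚ) := by
  rw [Gm, dif_pos rfl]

lemma Gm_mono (G : PSGame N R) (ht : G.graph.IsTree) (v : R) :
    ∀ a b, a < b → b < N → Gm G ht v a < Gm G ht v b := by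
  intro a b hab hb
  by_cases h : v = root ht
  · subst h
    rw [Gm_root]
    show (a:ℚ) < (b:ℚ)
    exact_mod_cast hab
  · rw [Gm_eq G ht v h]
    exact sfun_mono (Gm_mono G ht (par ht v)) (G.mono _ v) hab hb
termination_by depth ht v
decreasing_by
  have := depth_par ht v h
  omega

lemma Gm_match (G : PSGame N R) (ht : G.graph.IsTree) (v : R) (hv : v ≠ root ht)
    (α β : ℕ) (hα : α < N) (hβ : β < N) :
    (G.d (pl G ht v hv) (par ht v) (α+1) < G.d (pl G ht v hv) v (β+1) →
      Gm G ht (par ht v) α < Gm G ht v β) ∧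
    (G.d (pl G ht v hv) v (β+1) < G.d (pl G ht v hv) (par ht v) (α+1) →
      Gm G ht v β < Gm G ht (par ht v) α) := by
  rw [Gm_eq G ht v hv]
  constructor
  · intro h
    exact sfun_S2 (Gm_mono G ht (par ht v)) (G.mono _ _) hα h
  · intro h
    exact sfun_S3 (Gm_mono G ht (par ht v)) (G.mono _ _) hα hβ h

lemma Gm_match_all (G : PSGame N R) (ht : G.graph.IsTree)
    (hinj : Function.Injective G.strat) (i : Fin N) (u v : R)
    (hs : G.strat i = {u, v}) (hne : u ≠ v)
    (α β : ℕ) (hα : α < N) (hβ : β < N) :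
    (G.d i u (α+1) < G.d i v (β+1) ↔ Gm G ht u α < Gm G ht v β) := by
  have hadj : G.graph.Adj u v := by
    rw [PSGame.graph, SimpleGraph.fromRel_adj]
    exact ⟨hne, Or.inl ⟨i, hs⟩⟩
  have humem : u ∈ G.strat i := by rw [hs]; exact Finset.mem_insert_self _ _
  have hvmem : v ∈ G.strat i := by
    rw [hs]; exact Finset.mem_insert_of_mem (Finset.mem_singleton_self _)
  have htie : G.d i u (α+1) ≠ G.d i v (β+1) :=
    G.tie i u humem v hvmem (α+1) (by omega) (by omega) (β+1) (by omega) (by omega)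
      (Or.inl hne)
  rcases adj_par ht hadj with ⟨hv', hpv⟩ | ⟨hu', hpu⟩
  · have hpl : pl G ht v hv' = i := by
      apply hinj
      rw [pl_spec, hpv, hs]
    have hm := Gm_match G ht v hv' α β hα hβ
    rw [hpv, hpl] at hm
    constructor
    · exact hm.1
    · intro hg
      by_contra hd
      have hlt : G.d i v (β+1) < G.d i u (α+1) :=
        lt_of_le_of_ne (not_lt.mp hd) (Ne.symm htie)
      exact absurd (hm.2 hlt) (not_lt.mpr (le_of_lt hg))
  · have hpl : pl G ht u hu' = i := by
      apply hinj
      rw [pl_spec, hpu, hs, Finset.pair_comm]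
    have hm := Gm_match G ht u hu' β α hβ hα
    rw [hpu, hpl] at hm
    constructor
    · exact hm.2
    · intro hg
      by_contra hd
      have hlt : G.d i v (β+1) < G.d i u (α+1) :=
        lt_of_le_of_ne (not_lt.mp hd) (Ne.symm htie)
      exact absurd (hm.1 hlt) (not_lt.mpr (le_of_lt hg))

end GmConstruction

section GameSide

variable {N : ℕ} {R : Type} [Fintype R] [DecidableEq R]

lemma pair_eq_of_card_two {s : Finset R} (hs : s.card = 2) {a b : R}
    (ha : a ∈ s) (hb : b ∈ s) (hab : a ≠ b) : s = {a, b} := by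
  symm
  apply Finset.eq_of_subset_of_card_le
  · intro x hx
    rcases Finset.mem_insert.mp hx with h | h
    · rwa [h]
    · rw [Finset.mem_singleton] at h
      rwa [h]
  · rw [hs, Finset.card_insert_of_notMem (by simpa using hab), Finset.card_singleton]

/-- The potential function. -/
noncomputable def pot (Gmf : R → ℕ → ℚ) {strat : Fin N → Finset R}
    (S : GameState strat) : ℚ :=
  ∑ v : R, ∑ k ∈ Finset.range (congOf S v), Gmf v k

lemma congOf_le (S : GameState (N := N) (R := R) strat) (r : R) : congOf S r ≤ N := by
  calc congOf S r ≤ (Finset.univ : Finset (Fin N)).card := Finset.card_filter_le _ _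
    _ = N := by simp

lemma one_le_congOf (S : GameState (N := N) (R := R) strat) (i : Fin N) :
    1 ≤ congOf S (S.1 i) := by
  rw [congOf]
  apply Finset.card_pos.mpr
  exact ⟨i, by simp⟩

lemma congOf_lt_of_ne (S : GameState (N := N) (R := R) strat) (i : Fin N) {r : R}
    (hr : S.1 i ≠ r) : congOf S r < N := by
  rw [congOf]
  calc (Finset.univ.filter fun j => S.1 j = r).card
      ≤ (Finset.univ.erase i).card := by
        apply Finset.card_le_card
        intro j hj
        rw [Finset.mem_filter] at hj
        rw [Finset.mem_erase]
        refine ⟨?_, Finset.mem_univ _⟩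
        intro hji
        rw [hji] at hj
        exact hr hj.2
    _ = N - 1 := by rw [Finset.card_erase_of_mem (Finset.mem_univ i)]; simp
    _ < N := by
        have : 0 < N := i.pos
        omega

lemma step_strict_improvement (G : PSGame N R) (hcard : ∀ i, (G.strat i).card = 2)
    {i : Fin N} {S S' : G.State} (h : StepBy G.strat G.d i S S') :
    G.d i (S'.1 i) (congOf S (S'.1 i) + 1) < G.d i (S.1 i) (congOf S (S.1 i)) := by
  obtain ⟨hnbr, hne, -, -, -⟩ := h
  rw [CurrentBROf] at hnbr
  push_neg at hnbr
  obtain ⟨r', hr', hrne, hlt⟩ := hnbr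
  have hr'eq : r' = S'.1 i := by
    have h1 := pair_eq_of_card_two (hcard i) (S.2 i) hr' (Ne.symm hrne)
    have h2 := pair_eq_of_card_two (hcard i) (S.2 i) (S'.2 i) (Ne.symm hne)
    rw [h1] at h2
    have : S'.1 i ∈ ({S.1 i, r'} : Finset R) := by
      rw [h2]
      exact Finset.mem_insert_of_mem (Finset.mem_singleton_self _)
    rcases Finset.mem_insert.mp this with hc | hc
    · exact absurd hc hne
    · rw [Finset.mem_singleton] at hc
      exact hc.symm
  rwa [hr'eq] at hlt

lemma congOf_step_target (G : PSGame N R) {i : Fin N} {S S' : G.State}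
    (hne : S'.1 i ≠ S.1 i) (h5 : ∀ j, j ≠ i → S'.1 j = S.1 j) :
    congOf S' (S'.1 i) = congOf S (S'.1 i) + 1 := by
  rw [congOf, congOf]
  have hset : (Finset.univ.filter fun j => S'.1 j = S'.1 i) =
      insert i (Finset.univ.filter fun j => S.1 j = S'.1 i) := by
    ext j
    simp only [Finset.mem_filter, Finset.mem_insert, Finset.mem_univ, true_and]
    constructor
    · intro hj
      by_cases hji : j = i
      · exact Or.inl hji
      · exact Or.inr (by rw [← h5 j hji]; exact hj)
    · intro hj
      rcases hj with hj | hj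
      · rw [hj]
      · rcases eq_or_ne j i with hji | hji
        · rw [hji] at hj
          exact absurd hj.symm hne
        · rw [h5 j hji]; exact hj
  rw [hset, Finset.card_insert_of_notMem]
  simp only [Finset.mem_filter, Finset.mem_univ, true_and]
  intro hc
  exact hne hc.symm

lemma congOf_step_source (G : PSGame N R) {i : Fin N} {S S' : G.State}
    (hne : S'.1 i ≠ S.1 i) (h5 : ∀ j, j ≠ i → S'.1 j = S.1 j) :
    congOf S' (S.1 i) + 1 = congOf S (S.1 i) := by
  rw [congOf, congOf]
  have hset : (Finset.univ.filter fun j => S'.1 j = S.1 i) =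
      (Finset.univ.filter fun j => S.1 j = S.1 i).erase i := by
    ext j
    simp only [Finset.mem_filter, Finset.mem_erase, Finset.mem_univ, true_and]
    constructor
    · intro hj
      rcases eq_or_ne j i with hji | hji
      · rw [hji] at hj
        exact absurd hj hne
      · exact ⟨hji, by rw [← h5 j hji]; exact hj⟩
    · intro hj
      rw [h5 j hj.1]
      exact hj.2
  rw [hset, Finset.card_erase_of_mem]
  · have hpos : 0 < (Finset.univ.filter fun j => S.1 j = S.1 i).card :=
      Finset.card_pos.mpr ⟨i, by simp⟩
    omega
  · simp

lemma congOf_step_other (G : PSGame N R) {i : Fin N} {S S' : G.State}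
    (h5 : ∀ j, j ≠ i → S'.1 j = S.1 j) {r : R} (hru : r ≠ S.1 i) (hrv : r ≠ S'.1 i) :
    congOf S' r = congOf S r := by
  rw [congOf, congOf]
  congr 1
  ext j
  simp only [Finset.mem_filter, Finset.mem_univ, true_and]
  rcases eq_or_ne j i with hji | hji
  · subst hji
    constructor
    · intro hj; exact absurd hj.symm hrv
    · intro hj; exact absurd hj.symm hru
  · rw [h5 j hji]

lemma pot_lt_of_step (G : PSGame N R) (Gmf : R → ℕ → ℚ)
    (hcard : ∀ i, (G.strat i).card = 2)
    (hmatch : ∀ (i : Fin N) (u v : R) (α β : ℕ), G.strat i = {u, v} → u ≠ v →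
      α < N → β < N → (G.d i u (α+1) < G.d i v (β+1) ↔ Gmf u α < Gmf v β))
    {S S' : G.State} (h : G.Step S S') : pot Gmf S' < pot Gmf S := by
  obtain ⟨i, hstep⟩ := h
  have himp := step_strict_improvement G hcard hstep
  obtain ⟨-, hne, -, -, h5⟩ := hstep
  set u := S.1 i with hu
  set v := S'.1 i with hv
  have hvu : v ≠ u := hne
  have hcu1 : 1 ≤ congOf S u := one_le_congOf S i
  have hcuN : congOf S u ≤ N := congOf_le S u
  have hcvN : congOf S v < N := congOf_lt_of_ne S i (Ne.symm hvu)
  -- the potential inequality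
  have hs : G.strat i = {v, u} :=
    pair_eq_of_card_two (hcard i) (S'.2 i) (S.2 i) hvu
  have hgm : Gmf v (congOf S v) < Gmf u (congOf S u - 1) := by
    have := hmatch i v u (congOf S v) (congOf S u - 1) hs hvu hcvN (by omega)
    rw [show congOf S u - 1 + 1 = congOf S u by omega] at this
    exact this.mp himp
  -- compute the potential difference
  have hvcong : congOf S' v = congOf S v + 1 := congOf_step_target G hne h5
  have hucong : congOf S' u + 1 = congOf S u := congOf_step_source G hne h5
  have key : pot Gmf S' = pot Gmf S + Gmf v (congOf S v) - Gmf u (congOf S u - 1) := by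
    rw [pot, pot]
    have hsplit : ∀ r : R,
        (∑ k ∈ Finset.range (congOf S' r), Gmf r k) =
        (∑ k ∈ Finset.range (congOf S r), Gmf r k)
          + (if r = v then Gmf v (congOf S v) else 0)
          - (if r = u then Gmf u (congOf S u - 1) else 0) := by
      intro r
      rcases eq_or_ne r v with hrv | hrv
      · subst hrv
        rw [if_pos rfl, if_neg hvu, hvcong, Finset.sum_range_succ]
        ring
      · rcases eq_or_ne r u with hru | hru
        · subst hru
          rw [if_neg hrv, if_pos rfl]
          obtain ⟨m, hm⟩ : ∃ m, congOf S u = m + 1 := ⟨congOf S u - 1, by omega⟩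
          have h2 : congOf S' u = m := by omega
          have h3 : congOf S u - 1 = m := by omega
          rw [h2, h3, hm, Finset.sum_range_succ]
          ring
        · rw [if_neg hrv, if_neg hru, congOf_step_other G h5 hru hrv]
          ring
    rw [Finset.sum_congr rfl (fun r _ => hsplit r)]
    rw [Finset.sum_sub_distrib, Finset.sum_add_distrib]
    rw [Finset.sum_ite_eq' Finset.univ v (fun _ => Gmf v (congOf S v))]
    rw [Finset.sum_ite_eq' Finset.univ u (fun _ => Gmf u (congOf S u - 1))]
    simp
  rw [key]
  linarith

end GameSide

end TreeAcyclicAux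

/-- For every player-specific congestion game on a tree, the transition
graph is acyclic; in particular, the best response dynamics cannot cycle. -/
theorem tree_transition_graph_acyclic
    (N : ℕ) (R : Type) [Fintype R] [DecidableEq R]
    (G : PSGame N R) (htree : G.OnTree) :
    ∀ S : G.State, ¬ Relation.TransGen G.Step S S := by
  obtain ⟨hcard, hinj, ht⟩ := htree
  have hmatch := fun (i : Fin N) (u v : R) (α β : ℕ)
      (hs : G.strat i = {u, v}) (hne : u ≠ v) (hα : α < N) (hβ : β < N) =>
    TreeAcyclicAux.Gm_match_all G ht hinj i u v hs hne α β hα hβ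
  have hdec : ∀ {S S' : G.State}, Relation.TransGen G.Step S S' →
      TreeAcyclicAux.pot (TreeAcyclicAux.Gm G ht) S' <
      TreeAcyclicAux.pot (TreeAcyclicAux.Gm G ht) S := by
    intro S S' h
    induction h with
    | single hstep =>
        exact TreeAcyclicAux.pot_lt_of_step G _ hcard
          (fun i u v α β hs hne hα hβ => hmatch i u v α β hs hne hα hβ) hstep
    | tail _ hstep ih =>
        exact lt_trans (TreeAcyclicAux.pot_lt_of_step G _ hcard
          (fun i u v α β hs hne hα hβ => hmatch i u v α β hs hne hα hβ) hstep) ih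
  intro S hS
  exact lt_irrefl _ (hdec hS)
end

section
/- For every player-specific congestion game on a tree there exist common strictly increasing delay functions d_r : ℕ → ℕ, one for each resource r, that preserve every player's type: for every player i, all resources r, r' ∈ Σ_i and all congestion values 1 ≤ k, k' ≤ n, d^i_r(k) < d^i_{r'}(k') if and only if d_r(k) < d_{r'}(k'). Consequently, the transition graph of the player-specific game equals the transition graph of the standard singleton congestion game obtained by replacing each d^i_r with d_r. -/
/-!
Root the tree at a resource `r₀` and assign rational values `φ r k` by descending the tree: the
root gets `φ r₀ k = k`, and a child `r` of `p` gets, for each `k`, a value in the gap of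
`φ p` that corresponds to the position of `d i r k` among the `d i p k'`, where `i` is the unique
player with strategy set `{p, r}`. Each player's type only compares the two ends of one edge, so
it is preserved by `φ`; replacing values by ranks makes them natural numbers. Best responses
depend on the delays only through the players' types, so the transition graphs coincide.
-/

open Finset AffineMap

theorem Finset.eq_pair_of_card_eq_two {α : Type*} [DecidableEq α] {s : Finset α} {a b : α}
    (hs : #s = 2) (ha : a ∈ s) (hb : b ∈ s) (hab : a ≠ b) : s = {a, b} :=
  (eq_of_subset_of_card_le (insert_subset ha (singleton_subset_iff.2 hb))
    (by rw [hs, card_pair hab])).symm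

namespace SimpleGraph

variable {V : Type*} {H : SimpleGraph V} {r₀ u v : V}

open scoped Classical in
noncomputable def parent (H : SimpleGraph V) (r₀ v : V) : V :=
  if h : ∃ p, H.Adj p v ∧ H.dist r₀ p + 1 = H.dist r₀ v then h.choose else v

theorem Connected.adj_parent_and_dist (hc : H.Connected) (hv : v ≠ r₀) :
    H.Adj (H.parent r₀ v) v ∧ H.dist r₀ (H.parent r₀ v) + 1 = H.dist r₀ v := by
  have h : ∃ p, H.Adj p v ∧ H.dist r₀ p + 1 = H.dist r₀ v := by
    obtain ⟨w, hw⟩ := hc.exists_walk_length_eq_dist r₀ v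
    have hnil : ¬ w.Nil := Walk.not_nil_of_ne hv.symm
    have hadj := Walk.adj_penultimate hnil
    have hle : H.dist r₀ w.penultimate ≤ w.length - 1 := w.length_dropLast ▸ dist_le _
    have hpos : 0 < w.length := Walk.not_nil_iff_lt_length.mp hnil
    refine ⟨_, hadj, ?_⟩
    rcases hadj.diff_dist_adj (u := r₀) with h | h | h <;> omega
  rw [parent, dif_pos h]
  exact h.choose_spec

theorem IsTree.eq_parent_of_adj (ht : H.IsTree) (hadj : H.Adj u v)
    (hd : H.dist r₀ u + 1 = H.dist r₀ v) : u = H.parent r₀ v := by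
  classical
  obtain ⟨P, hP, -⟩ := ht.connected.exists_path_of_dist r₀ v
  -- Acyclicity: every neighbour of `v` that is closer to `r₀` lies on the path `P`.
  have key : ∀ x, H.Adj x v → H.dist r₀ x + 1 = H.dist r₀ v → x = P.penultimate := by
    intro x hadj hd
    obtain ⟨Q, hQ, hQlen⟩ := ht.connected.exists_path_of_dist r₀ x
    have hv : v ∉ Q.support := fun hv => by
      have := (dist_le (Q.takeUntil v hv)).trans (Q.length_takeUntil_le_length hv)
      omega
    exact ht.isAcyclic.eq_penultimate_of_adj_end hP hadj.symm
      (ht.isAcyclic.mem_support_of_ne_mem_support_of_adj_of_isPath hP hQ hadj.symm hv)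
  have hv : v ≠ r₀ := by rintro rfl; simp at hd
  obtain ⟨hadj', hd'⟩ := ht.connected.adj_parent_and_dist hv
  rw [key u hadj hd, key _ hadj' hd']

end SimpleGraph

section Interleave

variable {β 𝕜 : Type*} [LinearOrder β] [Field 𝕜] [LinearOrder 𝕜] [IsStrictOrderedRing 𝕜]
  {N : ℕ} {f g : ℕ → β} {ψ : ℕ → 𝕜} {b b' j k k' : ℕ} {y : β}

def countBelow (N : ℕ) (f : ℕ → β) (y : β) : ℕ := #{j ∈ Icc 1 N | f j < y}

theorem countBelow_mono : Monotone (countBelow N f) := fun _ _ hy =>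
  card_le_card fun _ hx => by
    rw [mem_filter] at hx ⊢
    exact ⟨hx.1, hx.2.trans_le hy⟩

theorem le_countBelow (hf : Monotone f) (hj : j ≤ N) (h : f j < y) : j ≤ countBelow N f y := by
  have hsub : Icc 1 j ⊆ {j ∈ Icc 1 N | f j < y} := fun x hx => by
    rw [mem_Icc] at hx
    exact mem_filter.2 ⟨mem_Icc.2 ⟨hx.1, hx.2.trans hj⟩, (hf hx.2).trans_lt h⟩
  simpa [countBelow] using card_le_card hsub

theorem countBelow_lt (hf : Monotone f) (hj : 1 ≤ j) (h : y ≤ f j) : countBelow N f y < j := by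
  have hsub : {j ∈ Icc 1 N | f j < y} ⊆ Icc 1 (j - 1) := fun x hx => by
    rw [mem_filter, mem_Icc] at hx
    have : x < j := lt_of_not_ge fun hjx => (hx.2.trans_le h).not_ge (hf hjx)
    exact mem_Icc.2 ⟨hx.1.1, by omega⟩
  have := card_le_card hsub
  simp only [Nat.card_Icc] at this
  unfold countBelow
  omega

noncomputable def insertBetween (ψ : ℕ → 𝕜) (b k : ℕ) : 𝕜 :=
  lineMap (ψ b) (ψ (b + 1)) ((k : 𝕜) / (k + 1))

theorem insertBetween_lt (hψ : StrictMono ψ) : insertBetween ψ b k < ψ (b + 1) :=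
  (lineMap_lt_right_iff_lt_one (hψ b.lt_succ_self)).2 <|
    (div_lt_one (by positivity)).2 (lt_add_one _)

theorem lt_insertBetween (hψ : StrictMono ψ) (hk : 0 < k) : ψ b < insertBetween ψ b k :=
  (left_lt_lineMap_iff_pos (hψ b.lt_succ_self)).2 (by positivity)

theorem insertBetween_lt_insertBetween (hψ : StrictMono ψ) (hb : b ≤ b') (hk : k < k') :
    insertBetween ψ b k < insertBetween ψ b' k' := by
  rcases hb.eq_or_lt with rfl | hb
  · refine (lineMap_lt_lineMap_iff_of_lt' (hψ b.lt_succ_self)).2 ?_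
    rw [div_lt_div_iff₀ (by positivity) (by positivity)]
    have : (k : 𝕜) < k' := by exact_mod_cast hk
    linarith
  · calc insertBetween ψ b k < ψ (b + 1) := insertBetween_lt hψ
      _ ≤ ψ b' := hψ.monotone hb
      _ ≤ insertBetween ψ b' k' :=
        (left_le_lineMap_iff_nonneg (hψ b'.lt_succ_self)).2 (by positivity)

/-- Places the value at `k` among the values `ψ j`, `1 ≤ j ≤ N`, where `g k` lies among the
`f j`. -/
noncomputable def interleave (N : ℕ) (ψ : ℕ → 𝕜) (f g : ℕ → β) (k : ℕ) : 𝕜 :=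
  insertBetween ψ (countBelow N f (g k)) k

theorem interleave_strictMono (hψ : StrictMono ψ) (hg : Monotone g) :
    StrictMono (interleave N ψ f g) := fun _ _ hk =>
  insertBetween_lt_insertBetween hψ (countBelow_mono (hg hk.le)) hk

theorem lt_interleave (hψ : StrictMono ψ) (hf : Monotone f) (hj : j ≤ N) (hk : 0 < k)
    (h : f j < g k) : ψ j < interleave N ψ f g k :=
  (hψ.monotone (le_countBelow hf hj h)).trans_lt (lt_insertBetween hψ hk)

theorem interleave_lt (hψ : StrictMono ψ) (hf : Monotone f) (hj : 1 ≤ j) (h : g k ≤ f j) :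
    interleave N ψ f g k < ψ j :=
  (insertBetween_lt hψ).trans_le (hψ.monotone (countBelow_lt hf hj h))

end Interleave

theorem exists_strictMono_nat_of_monotone {ι α : Type*} [Fintype ι] [LinearOrder α]
    (φ : ι → ℕ → α) (hφ : ∀ i, Monotone (φ i)) (N : ℕ) :
    ∃ D : ι → ℕ → ℕ, (∀ i, StrictMono (D i)) ∧
      ∀ i i' k k', k ≤ N → k' ≤ N → φ i k < φ i' k' → D i k < D i' k' := by
  classical
  let values : Finset α := (univ ×ˢ range (N + 1)).image fun p => φ p.1 p.2
  let rank (x : α) : ℕ := #{y ∈ values | y < x}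
  have rank_mono : Monotone rank := fun x x' hx =>
    card_le_card fun y hy => by
      rw [mem_filter] at hy ⊢
      exact ⟨hy.1, hy.2.trans_le hx⟩
  have rank_lt {i k x} (hk : k ≤ N) (hx : φ i k < x) : rank (φ i k) < rank x := by
    refine card_lt_card ⟨fun y hy => ?_, fun hsub => ?_⟩
    · rw [mem_filter] at hy ⊢
      exact ⟨hy.1, hy.2.trans hx⟩
    · have hmem : φ i k ∈ values := mem_image.2 ⟨(i, k), by simp [Nat.lt_succ_of_le hk], rfl⟩
      exact lt_irrefl _ (mem_filter.1 (hsub (mem_filter.2 ⟨hmem, hx⟩))).2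
  -- The summand `k` makes `D i` strictly monotone beyond `N` and is too small to disturb the
  -- comparison of different ranks.
  refine ⟨fun i k => (N + 1) * rank (φ i (min k N)) + k, fun i k k' hk => ?_,
    fun i i' k k' hk hk' hlt => ?_⟩
  · have := Nat.mul_le_mul_left (N + 1) (rank_mono (hφ i (min_le_min_right N hk.le)))
    dsimp only
    omega
  · have := Nat.mul_le_mul_left (N + 1) (rank_lt hk hlt)
    simp only [min_eq_left hk, min_eq_left hk'] at this ⊢
    rw [Nat.mul_succ] at this
    omega

section SameTypes

variable {N : ℕ} {R : Type} {strat : Fin N → Finset R}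
  {d d' : Fin N → R → ℕ → ℕ} {i : Fin N} {r r' : R} {k k' : ℕ}

def SameTypes (strat : Fin N → Finset R) (d d' : Fin N → R → ℕ → ℕ) : Prop :=
  ∀ i, ∀ r ∈ strat i, ∀ r' ∈ strat i, ∀ k, 1 ≤ k → k ≤ N → ∀ k', 1 ≤ k' → k' ≤ N →
    (d i r k < d i r' k' ↔ d' i r k < d' i r' k')

theorem SameTypes.le_iff (h : SameTypes strat d d') (hr : r ∈ strat i) (hr' : r' ∈ strat i)
    (hk : 1 ≤ k) (hkN : k ≤ N) (hk' : 1 ≤ k') (hkN' : k' ≤ N) :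
    d i r k ≤ d i r' k' ↔ d' i r k ≤ d' i r' k' := by
  simpa only [not_lt] using not_congr (h i r' hr' r hr k' hk' hkN' k hk hkN)

variable [Fintype R] [DecidableEq R]

theorem congOf_le (S : GameState strat) (r : R) : congOf S r ≤ N :=
  (card_filter_le _ _).trans_eq (card_fin N)

theorem congOf_pos (S : GameState strat) (i : Fin N) : 0 < congOf S (S.1 i) :=
  card_pos.2 ⟨i, mem_filter.2 ⟨mem_univ i, rfl⟩⟩

theorem congOf_lt_of_ne (S : GameState strat) (h : r ≠ S.1 i) : congOf S r < N := by
  have hsub : ({j | S.1 j = r} : Finset (Fin N)) ⊆ univ.erase i := fun j hj => by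
    rw [mem_filter] at hj
    exact mem_erase.2 ⟨by rintro rfl; exact h hj.2.symm, mem_univ j⟩
  have := card_le_card hsub
  rw [card_erase_of_mem (mem_univ i), card_fin] at this
  exact this.trans_lt (Nat.sub_lt i.pos one_pos)

theorem SameTypes.currentBROf_iff (h : SameTypes strat d d') (S : GameState strat) (i : Fin N) :
    CurrentBROf strat d S i ↔ CurrentBROf strat d' S i :=
  forall₂_congr fun _ hr' => imp_congr_right fun hne =>
    h.le_iff (S.2 i) hr' (congOf_pos S i) (congOf_le S _) (Nat.succ_pos _) (congOf_lt_of_ne S hne)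

theorem SameTypes.stepBy_iff (h : SameTypes strat d d') (S S' : GameState strat) :
    StepBy strat d i S S' ↔ StepBy strat d' i S S' := by
  refine and_congr (not_congr (h.currentBROf_iff S i)) (and_congr_right fun hne => and_congr
    (forall₂_congr fun _ hr' => imp_congr_right fun hne' => ?_) (and_congr_left' ?_))
  · exact h.le_iff (S'.2 i) hr' (Nat.succ_pos _) (congOf_lt_of_ne S hne) (Nat.succ_pos _)
      (congOf_lt_of_ne S hne')
  · exact h.le_iff (S'.2 i) (S.2 i) (Nat.succ_pos _) (congOf_lt_of_ne S hne) (congOf_pos S i)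
      (congOf_le S _)

end SameTypes

namespace PSGame

variable {N : ℕ} {R : Type} [Fintype R] [DecidableEq R] (G : PSGame N R) {i : Fin N}
  {p r r' r₀ : R} {k k' : ℕ}

/-- Broken ties make each type a strict total order, so it is determined by its strict
comparisons. -/
theorem sameTypes_of_lt_imp {d' : Fin N → R → ℕ → ℕ}
    (h : ∀ i, ∀ r ∈ G.strat i, ∀ r' ∈ G.strat i, ∀ k, 1 ≤ k → k ≤ N → ∀ k', 1 ≤ k' → k' ≤ N →
      G.d i r k < G.d i r' k' → d' i r k < d' i r' k') :
    SameTypes G.strat G.d d' := by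
  intro i r hr r' hr' k hk hkN k' hk' hkN'
  refine ⟨h i r hr r' hr' k hk hkN k' hk' hkN', fun hlt => ?_⟩
  by_contra hnot
  rcases (not_lt.1 hnot).lt_or_eq with hgt | heq
  · exact lt_asymm hlt (h i r' hr' r hr k' hk' hkN' k hk hkN hgt)
  · obtain ⟨rfl, rfl⟩ : r = r' ∧ k = k' := by
      by_contra hne
      exact G.tie i r hr r' hr' k hk hkN k' hk' hkN' (not_and_or.1 hne) heq.symm
    exact lt_irrefl _ hlt

theorem graph_adj_of_strat_eq (h : G.strat i = {p, r}) (hne : p ≠ r) : G.graph.Adj p r :=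
  SimpleGraph.fromRel_adj _ _ _ |>.2 ⟨hne, Or.inl ⟨i, h⟩⟩

noncomputable def treeValue (G : PSGame N R) (r₀ r : R) : ℕ → ℚ :=
  if h : ∃ i, G.strat i = {G.graph.parent r₀ r, r} ∧
      G.graph.dist r₀ (G.graph.parent r₀ r) < G.graph.dist r₀ r then
    interleave N (G.treeValue r₀ (G.graph.parent r₀ r)) (G.d h.choose (G.graph.parent r₀ r))
      (G.d h.choose r)
  else Nat.cast
termination_by G.graph.dist r₀ r
decreasing_by exact h.choose_spec.2

theorem treeValue_strictMono (r₀ r : R) : StrictMono (G.treeValue r₀ r) := by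
  induction r using PSGame.treeValue.induct G r₀ with
  | case1 r h ih =>
    rw [treeValue, dif_pos h]
    exact interleave_strictMono ih (G.mono _ r).monotone
  | case2 r h =>
    rw [treeValue, dif_neg h]
    exact Nat.strictMono_cast

theorem treeValue_eq_interleave (hinj : Function.Injective G.strat) (ht : G.graph.IsTree)
    (hi : G.strat i = {p, r}) (hd : G.graph.dist r₀ p + 1 = G.graph.dist r₀ r) :
    G.treeValue r₀ r = interleave N (G.treeValue r₀ p) (G.d i p) (G.d i r) := by
  have hne : p ≠ r := by rintro rfl; omega
  obtain rfl := ht.eq_parent_of_adj (G.graph_adj_of_strat_eq hi hne) hd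
  have h : ∃ i, G.strat i = {G.graph.parent r₀ r, r} ∧
      G.graph.dist r₀ (G.graph.parent r₀ r) < G.graph.dist r₀ r := ⟨i, hi, by omega⟩
  rw [treeValue, dif_pos h, hinj (h.choose_spec.1.trans hi.symm)]

theorem treeValue_lt_of_d_lt (htree : G.OnTree) (r₀ : R) (hr : r ∈ G.strat i)
    (hr' : r' ∈ G.strat i) (hkN : k ≤ N) (hk' : 1 ≤ k') (h : G.d i r k < G.d i r' k') :
    G.treeValue r₀ r k < G.treeValue r₀ r' k' := by
  obtain ⟨hcard, hinj, ht⟩ := htree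
  rcases eq_or_ne r r' with rfl | hne
  · exact G.treeValue_strictMono r₀ r ((G.mono i r).lt_iff_lt.1 h)
  have hpair := eq_pair_of_card_eq_two (hcard i) hr hr' hne
  rcases ht.dist_eq_dist_add_one_of_adj r₀ (G.graph_adj_of_strat_eq hpair hne) with hd | hd
  · rw [G.treeValue_eq_interleave hinj ht (hpair.trans (pair_comm r r')) hd.symm]
    exact interleave_lt (G.treeValue_strictMono r₀ r') (G.mono i r').monotone hk' h.le
  · rw [G.treeValue_eq_interleave hinj ht hpair hd.symm]
    exact lt_interleave (G.treeValue_strictMono r₀ r) (G.mono i r).monotone hkN hk' h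

end PSGame

/-- For every player-specific congestion game on a tree there exist common
strictly increasing delay functions `D r`, one for each resource, preserving every
player's type: for every player `i`, all resources `r, r' ∈ strat i` and all
congestion values `1 ≤ k, k' ≤ N`, `d i r k < d i r' k' ↔ D r k < D r' k'`.
Consequently, the transition graph of the player-specific game equals the transition
graph of the standard singleton congestion game obtained by replacing each `d i r`
with `D r`. -/
theorem tree_common_delay_functions
    (N : ℕ) (R : Type) [Fintype R] [DecidableEq R]
    (G : PSGame N R) (htree : G.OnTree) :
    ∃ D : R → ℕ → ℕ,
      (∀ r, StrictMono (D r)) ∧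
      (∀ i : Fin N, ∀ r ∈ G.strat i, ∀ r' ∈ G.strat i,
        ∀ k, 1 ≤ k → k ≤ N → ∀ k', 1 ≤ k' → k' ≤ N →
          (G.d i r k < G.d i r' k' ↔ D r k < D r' k')) ∧
      (∀ (i : Fin N) (S S' : GameState G.strat),
        StepBy G.strat G.d i S S' ↔ StepBy G.strat (fun _ r => D r) i S S') := by
  obtain ⟨r₀⟩ := htree.2.2.connected.nonempty
  obtain ⟨D, hD_mono, hD_lt⟩ := exists_strictMono_nat_of_monotone (G.treeValue r₀)
    (fun r => (G.treeValue_strictMono r₀ r).monotone) N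
  have htypes : SameTypes G.strat G.d fun _ r => D r :=
    G.sameTypes_of_lt_imp fun i r hr r' hr' k hk hkN k' hk' hkN' h =>
      hD_lt r r' k k' hkN hkN' (G.treeValue_lt_of_d_lt htree r₀ hr hr' hkN hk' h)
  exact ⟨D, hD_mono, htypes, fun i S S' => htypes.stepBy_iff S S'⟩
end

section
/- Let Γ be a player-specific congestion game on a circle whose transition graph contains a directed cycle. Then every player changes its strategy at least twice on every directed cycle of TG(Γ). -/
open scoped ENNReal NNReal

/-- A player-specific singleton congestion game on a circle with `n` players:
the resources are `0, …, n-1`, and player `i` chooses between resource `i`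
(its 0-strategy, with delay function `d0 i`) and resource `i+1 (mod n)`
(its 1-strategy, with delay function `d1 i`). The delay functions are strictly
increasing and ties are broken (for each player the delays of its two resources
at congestions `1 ≤ k ≤ n` are pairwise distinct). -/
structure CircleGame (n : ℕ) where
  d0 : Fin n → ℕ → ℕ
  d1 : Fin n → ℕ → ℕ
  mono0 : ∀ i, StrictMono (d0 i)
  mono1 : ∀ i, StrictMono (d1 i)
  tie : ∀ i : Fin n, ∀ k, 1 ≤ k → k ≤ n → ∀ k', 1 ≤ k' → k' ≤ n → d0 i k ≠ d1 i k'

namespace CircleGame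

variable {n : ℕ} [NeZero n]

/-- A state is a function `s : Fin n → Bool`: `s i = false` iff player `i` plays its
0-strategy (resource `i`), and `s i = true` iff it plays its 1-strategy (resource `i+1`).
`cong s r` is the congestion of resource `r`: resource `r` is allocated by player `r`
(if it plays its 0-strategy) and by player `r-1` (if it plays its 1-strategy). -/
def cong (s : Fin n → Bool) (r : Fin n) : ℕ :=
  (if s r = false then 1 else 0) + (if s (r - 1) = true then 1 else 0)

/-- The current resource of player `i` is a best response to state `s`. -/
def CurrentBR (G : CircleGame n) (s : Fin n → Bool) (i : Fin n) : Prop :=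
  if s i = false then G.d0 i (cong s i) ≤ G.d1 i (cong s (i + 1) + 1)
  else G.d1 i (cong s (i + 1)) ≤ G.d0 i (cong s i + 1)

/-- One best-response step: a player whose current resource is not a best response
switches to its (unique) other resource, which is then its best response. -/
def Step (G : CircleGame n) (s s' : Fin n → Bool) : Prop :=
  ∃ i, ¬ G.CurrentBR s i ∧ s' = Function.update s i (!(s i))

/-- Nash equilibrium: every player's current resource is a best response. -/
def IsNash (G : CircleGame n) (s : Fin n → Bool) : Prop := ∀ i, G.CurrentBR s i

/-- type 1 : `d_{r_i}(1) < d_{r_i}(2) < d_{r_{i+1}}(1) < d_{r_{i+1}}(2)`. -/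
def IsType1 (G : CircleGame n) (i : Fin n) : Prop :=
  G.d0 i 1 < G.d0 i 2 ∧ G.d0 i 2 < G.d1 i 1 ∧ G.d1 i 1 < G.d1 i 2

/-- type 1' : roles of the two resources exchanged. -/
def IsType1' (G : CircleGame n) (i : Fin n) : Prop :=
  G.d1 i 1 < G.d1 i 2 ∧ G.d1 i 2 < G.d0 i 1 ∧ G.d0 i 1 < G.d0 i 2

/-- type 2 : `d_{r_i}(1) < d_{r_{i+1}}(1) < d_{r_i}(2) < d_{r_{i+1}}(2)`. -/
def IsType2 (G : CircleGame n) (i : Fin n) : Prop :=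
  G.d0 i 1 < G.d1 i 1 ∧ G.d1 i 1 < G.d0 i 2 ∧ G.d0 i 2 < G.d1 i 2

/-- type 2' : roles of the two resources exchanged. -/
def IsType2' (G : CircleGame n) (i : Fin n) : Prop :=
  G.d1 i 1 < G.d0 i 1 ∧ G.d0 i 1 < G.d1 i 2 ∧ G.d1 i 2 < G.d0 i 2

/-- type 3 : `d_{r_i}(1) < d_{r_{i+1}}(1) < d_{r_{i+1}}(2) < d_{r_i}(2)`. -/
def IsType3 (G : CircleGame n) (i : Fin n) : Prop :=
  G.d0 i 1 < G.d1 i 1 ∧ G.d1 i 1 < G.d1 i 2 ∧ G.d1 i 2 < G.d0 i 2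

/-- type 3' : roles of the two resources exchanged. -/
def IsType3' (G : CircleGame n) (i : Fin n) : Prop :=
  G.d1 i 1 < G.d0 i 1 ∧ G.d0 i 1 < G.d0 i 2 ∧ G.d0 i 2 < G.d1 i 2

/-- Resource `r_i` is a termination point for overload tokens: the pair of types of
players `i-1` and `i` is one of `(2',2), (3,3'), (3,2), (2',3')`. -/
def OverloadTP (G : CircleGame n) (i : Fin n) : Prop :=
  (G.IsType2' (i - 1) ∧ G.IsType2 i) ∨ (G.IsType3 (i - 1) ∧ G.IsType3' i) ∨
  (G.IsType3 (i - 1) ∧ G.IsType2 i) ∨ (G.IsType2' (i - 1) ∧ G.IsType3' i)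

/-- Resource `r_i` is a termination point for underload tokens: the pair of types of
players `i-1` and `i` is one of `(2,2'), (3,3'), (2,3'), (3,2')`. -/
def UnderloadTP (G : CircleGame n) (i : Fin n) : Prop :=
  (G.IsType2 (i - 1) ∧ G.IsType2' i) ∨ (G.IsType3 (i - 1) ∧ G.IsType3' i) ∨
  (G.IsType2 (i - 1) ∧ G.IsType3' i) ∨ (G.IsType3 (i - 1) ∧ G.IsType2' i)

open scoped Classical in
/-- The set of players whose current resource is not a best response. -/
noncomputable def unsat (G : CircleGame n) (s : Fin n → Bool) : Finset (Fin n) :=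
  Finset.univ.filter fun i => ¬ G.CurrentBR s i

/-- One step of the random best response dynamics: in a state that is not a Nash
equilibrium, a player whose current resource is not a best response is selected
uniformly at random and switches to its best response; Nash equilibria are absorbing. -/
noncomputable def stepPMF (G : CircleGame n) (s : Fin n → Bool) : PMF (Fin n → Bool) :=
  if h : (G.unsat s).Nonempty then
    (PMF.uniformOfFinset (G.unsat s) h).bind fun i => PMF.pure (Function.update s i (!(s i)))
  else PMF.pure s

/-- The distribution of the random best response dynamics after `t` steps, started in `s`. -/
noncomputable def walk (G : CircleGame n) (s : Fin n → Bool) : ℕ → PMF (Fin n → Bool)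
  | 0 => PMF.pure s
  | t + 1 => (walk G s t).bind G.stepPMF

open scoped Classical in
/-- The expected number of steps until the random best response dynamics started in `s`
reaches a Nash equilibrium: since Nash equilibria are absorbing, this is
`∑_{t ≥ 0} Pr[X_t is not a Nash equilibrium]`. -/
noncomputable def expTime (G : CircleGame n) (s : Fin n → Bool) : ℝ≥0∞ :=
  ∑' t : ℕ, ∑ s' ∈ Finset.univ.filter (fun s' => ¬ G.IsNash s'), G.walk s t s'

end CircleGame

/-!
Along a cycle every player returns to its initial strategy, so it changes strategy an even number
of times, and it suffices to show that every player moves at least once. If player `i` never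
moves, then neither does player `i + 1`; going around the circle, nobody moves, which is absurd.

A player `j` that moves on a cycle moves in both directions, so at some time it strictly prefers
each of its two resources. Since its delay on a resource lies between the delays at congestion
`1` and `2`, this forbids `j` to move while agreeing with both neighbours, and if one neighbour
never moves, `j` moves only while disagreeing with the other one. Hence, if `i` never moves, the
number of resources other than `i` and `i + 1` with congestion `0` or `2` (the under- and overload
tokens of the paper) never increases along the cycle and drops whenever `i + 1` moves; as it
returns to its initial value, `i + 1` never moves. For `n = 2` both neighbours of `i + 1` are `i`,
and the two strict preferences of `i + 1` contradict each other.
-/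

open Finset Function

section BoolSequence

variable {g : ℕ → Bool}

theorem exists_eq_and_succ_eq_not_of_le {b : Bool} {a c : ℕ} (hac : a ≤ c) (ha : g a = b)
    (hc : g c = !b) : ∃ k, a ≤ k ∧ k < c ∧ g k = b ∧ g (k + 1) = !b := by
  induction c, hac using Nat.le_induction with
  | base => simp_all
  | succ c hac ih =>
    by_cases hgc : g c = b
    · exact ⟨c, hac, c.lt_succ_self, hgc, hc⟩
    · obtain ⟨k, hak, hkc, hk⟩ := ih (Bool.eq_not.2 hgc)
      exact ⟨k, hak, hkc.trans c.lt_succ_self, hk⟩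

theorem exists_lt_and_eq_and_succ_eq_not {L k₀ : ℕ} (hL : g L = g 0) (hk₀ : k₀ < L)
    (hflip : g (k₀ + 1) ≠ g k₀) (b : Bool) : ∃ k < L, g k = b ∧ g (k + 1) = !b := by
  by_cases hb : g k₀ = b
  · exact ⟨k₀, hk₀, hb, Bool.eq_not.2 (hb ▸ hflip)⟩
  have hb' : g (k₀ + 1) = b := by revert hflip hb; cases g (k₀ + 1) <;> cases g k₀ <;> simp
  by_cases h0 : g 0 = b
  · obtain ⟨k, -, hk, hkb⟩ := exists_eq_and_succ_eq_not_of_le k₀.zero_le h0 (Bool.eq_not.2 hb)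
    exact ⟨k, hk.trans hk₀, hkb⟩
  · obtain ⟨k, -, hk, hkb⟩ := exists_eq_and_succ_eq_not_of_le hk₀ hb' (hL ▸ Bool.eq_not.2 h0)
    exact ⟨k, hk, hkb⟩

end BoolSequence

theorem even_card_filter_succ_ne_iff (g : ℕ → Bool) (L : ℕ) :
    Even #{k ∈ range L | g (k + 1) ≠ g k} ↔ g L = g 0 := by
  induction L with
  | zero => simp
  | succ L ih =>
    rw [range_add_one, filter_insert]
    split_ifs with h
    · rw [card_insert_of_notMem (by simp), Nat.even_add_one, ih]
      revert h; cases g (L + 1) <;> cases g L <;> cases g 0 <;> simp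
    · rw [ih, not_not.1 h]

theorem apply_succ_eq_of_succ_le_of_eq {α : Type*} [PartialOrder α] {P : ℕ → α} {L : ℕ}
    (hle : ∀ k < L, P (k + 1) ≤ P k) (hL : P L = P 0) {k : ℕ} (hk : k < L) :
    P (k + 1) = P k := by
  have hanti : Antitone fun t => P (min t L) := antitone_nat_of_succ_le fun t => by
    rcases lt_or_ge t L with ht | ht
    · simpa [min_eq_left ht.le, min_eq_left (Nat.succ_le_of_lt ht)] using hle t ht
    · simp [min_eq_right ht, min_eq_right (ht.trans t.le_succ)]
  refine le_antisymm (hle k hk) ?_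
  calc P k = P (min k L) := by rw [min_eq_left hk.le]
    _ ≤ P (min 0 L) := hanti k.zero_le
    _ = P (min L L) := by simp [hL]
    _ ≤ P (min (k + 1) L) := hanti (Nat.succ_le_of_lt hk)
    _ = P (k + 1) := by rw [min_eq_left (Nat.succ_le_of_lt hk)]

def Frozen {α β : Type*} (L : ℕ) (f : ℕ → α → β) (j : α) : Prop :=
  ∀ k, k < L → f (k + 1) j = f k j

theorem Frozen.apply_eq {α β : Type*} {L : ℕ} {f : ℕ → α → β} {j : α} (h : Frozen L f j)
    {k : ℕ} (hk : k ≤ L) : f k j = f 0 j := by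
  induction k with
  | zero => rfl
  | succ k ih => rw [h k hk, ih (Nat.le_of_succ_le hk)]

section CardSdiff

variable {α : Type*} [DecidableEq α] {A B T : Finset α}

theorem Finset.card_le_card_iff_of_sdiff_eq (h : A \ T = B \ T) :
    #A ≤ #B ↔ #(A ∩ T) ≤ #(B ∩ T) := by
  rw [← card_inter_add_card_sdiff A T, ← card_inter_add_card_sdiff B T, h]
  omega

theorem Finset.card_lt_card_iff_of_sdiff_eq (h : A \ T = B \ T) :
    #A < #B ↔ #(A ∩ T) < #(B ∩ T) := by
  rw [← card_inter_add_card_sdiff A T, ← card_inter_add_card_sdiff B T, h]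
  omega

theorem Finset.card_inter_pair {a b : α} (hab : a ≠ b) :
    #(A ∩ {a, b}) = (if a ∈ A then 1 else 0) + (if b ∈ A then 1 else 0) := by
  rw [inter_comm, ← filter_mem_eq_inter, card_filter, sum_pair hab]

end CardSdiff

open Fin.NatCast in
theorem Fin.forall_of_imp_add_one {n : ℕ} [NeZero n] {p : Fin n → Prop} {i : Fin n} (hi : p i)
    (h : ∀ j, p j → p (j + 1)) (j : Fin n) : p j := by
  have key (m : ℕ) : p (i + m) := by
    induction m with
    | zero => simpa using hi
    | succ m ih => simpa [add_assoc] using h _ ih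
  simpa using key (j - i).val

theorem Fin.one_ne_zero_of_two_le {n : ℕ} [NeZero n] (hn : 2 ≤ n) : (1 : Fin n) ≠ 0 := by
  rw [Ne, Fin.ext_iff]
  simp [Nat.mod_eq_of_lt (by omega : 1 < n)]

theorem Fin.two_ne_zero_of_three_le {n : ℕ} [NeZero n] (hn : 3 ≤ n) : (2 : Fin n) ≠ 0 := by
  rw [Ne, Fin.ext_iff]
  simp [Nat.mod_eq_of_lt (by omega : 2 < n)]

namespace CircleGame

variable {n : ℕ} [NeZero n]

section Delays

variable (G : CircleGame n)

/-- `delay0 s j` and `delay1 s j` are the delays of player `j` on resources `j` and `j + 1` when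
the other players play as in `s`. -/
def delay0 (s : Fin n → Bool) (j : Fin n) : ℕ := G.d0 j (if s (j - 1) then 2 else 1)

def delay1 (s : Fin n → Bool) (j : Fin n) : ℕ := G.d1 j (if s (j + 1) then 1 else 2)

theorem d0_one_le_delay0 (s : Fin n → Bool) (j : Fin n) : G.d0 j 1 ≤ G.delay0 s j :=
  (G.mono0 j).monotone (by split <;> omega)

theorem delay0_le_d0_two (s : Fin n → Bool) (j : Fin n) : G.delay0 s j ≤ G.d0 j 2 :=
  (G.mono0 j).monotone (by split <;> omega)

theorem d1_one_le_delay1 (s : Fin n → Bool) (j : Fin n) : G.d1 j 1 ≤ G.delay1 s j :=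
  (G.mono1 j).monotone (by split <;> omega)

theorem delay1_le_d1_two (s : Fin n → Bool) (j : Fin n) : G.delay1 s j ≤ G.d1 j 2 :=
  (G.mono1 j).monotone (by split <;> omega)

theorem not_currentBR_iff_of_false {s : Fin n → Bool} {j : Fin n} (hj : s j = false) :
    ¬ G.CurrentBR s j ↔ G.delay1 s j < G.delay0 s j := by
  have hj' : j + 1 - 1 = j := add_sub_cancel_right j 1
  cases hl : s (j - 1) <;> cases hr : s (j + 1) <;>
    simp [CurrentBR, cong, delay0, delay1, hj, hj', hl, hr]

theorem not_currentBR_iff_of_true {s : Fin n → Bool} {j : Fin n} (hj : s j = true) :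
    ¬ G.CurrentBR s j ↔ G.delay0 s j < G.delay1 s j := by
  have hj' : j + 1 - 1 = j := add_sub_cancel_right j 1
  cases hl : s (j - 1) <;> cases hr : s (j + 1) <;>
    simp [CurrentBR, cong, delay0, delay1, hj, hj', hl, hr]

end Delays

theorem Step.not_currentBR_and_eq_update {G : CircleGame n} {s s' : Fin n → Bool}
    (h : G.Step s s') {j : Fin n} (hj : s' j ≠ s j) :
    ¬ G.CurrentBR s j ∧ s' = update s j (!s j) := by
  obtain ⟨m, hm, rfl⟩ := h
  obtain rfl : m = j := by
    by_contra hmj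
    exact hj (update_of_ne (Ne.symm hmj) _ _)
  exact ⟨hm, rfl⟩

def IsCycle (G : CircleGame n) (L : ℕ) (f : ℕ → Fin n → Bool) : Prop :=
  (∀ k, k < L → G.Step (f k) (f (k + 1))) ∧ f L = f 0

section Cycle

variable {G : CircleGame n} {L : ℕ} {f : ℕ → Fin n → Bool} {j : Fin n} {k : ℕ}

theorem IsCycle.exists_delay_lt_both_ways (hf : G.IsCycle L f) (hk : k < L)
    (hj : f (k + 1) j ≠ f k j) :
    (∃ k₁ < L, G.delay1 (f k₁) j < G.delay0 (f k₁) j) ∧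
      ∃ k₂ < L, G.delay0 (f k₂) j < G.delay1 (f k₂) j := by
  have unhappy (b : Bool) : ∃ k' < L, f k' j = b ∧ ¬ G.CurrentBR (f k') j := by
    obtain ⟨k', hk', hb, hb'⟩ :=
      exists_lt_and_eq_and_succ_eq_not (g := fun t => f t j) (congrFun hf.2 j) hk hj b
    refine ⟨k', hk', hb, ((hf.1 k' hk').not_currentBR_and_eq_update ?_).1⟩
    simp [hb, hb']
  obtain ⟨k₁, hk₁, h₁, u₁⟩ := unhappy false
  obtain ⟨k₂, hk₂, h₂, u₂⟩ := unhappy true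
  exact ⟨⟨k₁, hk₁, (G.not_currentBR_iff_of_false h₁).1 u₁⟩,
    k₂, hk₂, (G.not_currentBR_iff_of_true h₂).1 u₂⟩

theorem IsCycle.ne_left_or_ne_right_of_flip (hf : G.IsCycle L f) (hk : k < L)
    (hj : f (k + 1) j ≠ f k j) : f k (j - 1) ≠ f k j ∨ f k (j + 1) ≠ f k j := by
  obtain ⟨⟨k₁, -, h₁⟩, k₂, -, h₂⟩ := hf.exists_delay_lt_both_ways hk hj
  have hu := ((hf.1 k hk).not_currentBR_and_eq_update hj).1
  by_contra! ⟨hl, hr⟩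
  cases hs : f k j
  · replace hu : G.d1 j 2 < G.d0 j 1 := by
      simpa [delay0, delay1, hl, hr, hs] using (G.not_currentBR_iff_of_false hs).1 hu
    linarith [G.d0_one_le_delay0 (f k₂) j, G.delay1_le_d1_two (f k₂) j]
  · replace hu : G.d0 j 2 < G.d1 j 1 := by
      simpa [delay0, delay1, hl, hr, hs] using (G.not_currentBR_iff_of_true hs).1 hu
    linarith [G.d1_one_le_delay1 (f k₁) j, G.delay0_le_d0_two (f k₁) j]

theorem IsCycle.right_ne_of_flip_of_frozen_left (hf : G.IsCycle L f)
    (hleft : Frozen L f (j - 1)) (hk : k < L) (hj : f (k + 1) j ≠ f k j) :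
    f k (j + 1) ≠ f k j := by
  have hconst {t : ℕ} (ht : t < L) : G.delay0 (f t) j = G.delay0 (f 0) j := by
    simp only [delay0, hleft.apply_eq ht.le]
  obtain ⟨⟨k₁, hk₁, h₁⟩, k₂, hk₂, h₂⟩ := hf.exists_delay_lt_both_ways hk hj
  have hu := ((hf.1 k hk).not_currentBR_and_eq_update hj).1
  rw [hconst hk₁] at h₁
  rw [hconst hk₂] at h₂
  intro hr
  cases hs : f k j
  · replace hu : G.d1 j 2 < G.delay0 (f 0) j := by
      simpa [hconst hk, delay1, hr, hs] using (G.not_currentBR_iff_of_false hs).1 hu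
    linarith [G.delay1_le_d1_two (f k₂) j]
  · replace hu : G.delay0 (f 0) j < G.d1 j 1 := by
      simpa [hconst hk, delay1, hr, hs] using (G.not_currentBR_iff_of_true hs).1 hu
    linarith [G.d1_one_le_delay1 (f k₁) j]

theorem IsCycle.left_ne_of_flip_of_frozen_right (hf : G.IsCycle L f)
    (hright : Frozen L f (j + 1)) (hk : k < L) (hj : f (k + 1) j ≠ f k j) :
    f k (j - 1) ≠ f k j := by
  have hconst {t : ℕ} (ht : t < L) : G.delay1 (f t) j = G.delay1 (f 0) j := by
    simp only [delay1, hright.apply_eq ht.le]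
  obtain ⟨⟨k₁, hk₁, h₁⟩, k₂, hk₂, h₂⟩ := hf.exists_delay_lt_both_ways hk hj
  have hu := ((hf.1 k hk).not_currentBR_and_eq_update hj).1
  rw [hconst hk₁] at h₁
  rw [hconst hk₂] at h₂
  intro hl
  cases hs : f k j
  · replace hu : G.delay1 (f 0) j < G.d0 j 1 := by
      simpa [hconst hk, delay0, hl, hs] using (G.not_currentBR_iff_of_false hs).1 hu
    linarith [G.d0_one_le_delay0 (f k₂) j]
  · replace hu : G.d0 j 2 < G.delay1 (f 0) j := by
      simpa [hconst hk, delay0, hl, hs] using (G.not_currentBR_iff_of_true hs).1 hu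
    linarith [G.delay0_le_d0_two (f k₁) j]

theorem IsCycle.frozen_of_frozen_left_of_frozen_right (hf : G.IsCycle L f)
    (hleft : Frozen L f (j - 1)) (hright : Frozen L f (j + 1)) : Frozen L f j := by
  intro k hk
  by_contra hj
  obtain ⟨⟨k₁, hk₁, h₁⟩, k₂, hk₂, h₂⟩ := hf.exists_delay_lt_both_ways hk hj
  simp only [delay0, delay1, hleft.apply_eq hk₁.le, hleft.apply_eq hk₂.le,
    hright.apply_eq hk₁.le, hright.apply_eq hk₂.le] at h₁ h₂
  exact lt_asymm h₁ h₂

end Cycle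

section Tokens

theorem cong_ne_one_iff (s : Fin n → Bool) (r : Fin n) : cong s r ≠ 1 ↔ s (r - 1) ≠ s r := by
  unfold cong
  cases s r <;> cases s (r - 1) <;> simp

theorem cong_update_of_ne {s : Fin n → Bool} {j r : Fin n} (hr : r ≠ j) (hr' : r ≠ j + 1)
    (b : Bool) : cong (update s j b) r = cong s r := by
  have : r - 1 ≠ j := fun h => hr' (by rw [← h, sub_add_cancel])
  simp [cong, update_of_ne hr, update_of_ne this]

/-- Resources with congestion `0` or `2` carry the under- and overload tokens of the paper;
the two resources of player `i` are not counted. -/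
def tokens (i : Fin n) (s : Fin n → Bool) : Finset (Fin n) :=
  {r | r ≠ i ∧ r ≠ i + 1 ∧ cong s r ≠ 1}

theorem mem_tokens {i r : Fin n} {s : Fin n → Bool} :
    r ∈ tokens i s ↔ r ≠ i ∧ r ≠ i + 1 ∧ s (r - 1) ≠ s r := by
  simp [tokens, cong_ne_one_iff]

theorem tokens_update_sdiff (i j : Fin n) (s : Fin n → Bool) (b : Bool) :
    tokens i (update s j b) \ {j, j + 1} = tokens i s \ {j, j + 1} := by
  ext r
  simp only [mem_sdiff, tokens, mem_filter, mem_univ, true_and, mem_insert, mem_singleton,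
    not_or, and_congr_left_iff, and_imp]
  intro hr hr'
  rw [cong_update_of_ne hr hr']

open Fin.CommRing

variable {i j : Fin n} {s : Fin n → Bool}

theorem card_tokens_update_lt_of_add_one (hn : 3 ≤ n) (h : s (i + 1 + 1) ≠ s (i + 1)) :
    #(tokens i (update s (i + 1) (!s (i + 1)))) < #(tokens i s) := by
  have h1 := Fin.one_ne_zero_of_two_le (by omega : 2 ≤ n)
  have h2 := Fin.two_ne_zero_of_three_le hn
  have e1 : i + 1 + 1 ≠ i + 1 := by rw [← sub_ne_zero]; ring_nf; exact h1
  have e2 : i + 1 + 1 ≠ i := by rw [← sub_ne_zero]; ring_nf; exact h2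
  rw [card_lt_card_iff_of_sdiff_eq (tokens_update_sdiff _ _ _ _), card_inter_pair e1.symm,
    card_inter_pair e1.symm]
  simp [mem_tokens, e1, e2, Ne.symm h]

theorem card_tokens_update_lt_of_sub_one (hn : 3 ≤ n) (h : s (i - 1 - 1) ≠ s (i - 1)) :
    #(tokens i (update s (i - 1) (!s (i - 1)))) < #(tokens i s) := by
  have h1 := Fin.one_ne_zero_of_two_le (by omega : 2 ≤ n)
  have h2 := Fin.two_ne_zero_of_three_le hn
  have e1 : i - 1 ≠ i - 1 + 1 := by rw [← sub_ne_zero]; ring_nf; simpa using h1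
  have e2 : i - 1 - 1 ≠ i - 1 := by rw [← sub_ne_zero]; ring_nf; simpa using h1
  have e3 : i - 1 ≠ i := by rw [← sub_ne_zero]; ring_nf; simpa using h1
  have e4 : i - 1 ≠ i + 1 := by rw [← sub_ne_zero]; ring_nf; simpa using h2
  rw [card_lt_card_iff_of_sdiff_eq (tokens_update_sdiff _ _ _ _), card_inter_pair e1,
    card_inter_pair e1]
  simp [mem_tokens, e2, e3, e4, h]

theorem card_tokens_update_le (hn : 3 ≤ n) (hj₁ : j ≠ i - 1) (hj₂ : j ≠ i) (hj₃ : j ≠ i + 1)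
    (h : s (j - 1) ≠ s j ∨ s (j + 1) ≠ s j) :
    #(tokens i (update s j (!s j))) ≤ #(tokens i s) := by
  have h1 := Fin.one_ne_zero_of_two_le (by omega : 2 ≤ n)
  have e1 : j ≠ j + 1 := by rw [← sub_ne_zero]; ring_nf; simpa using h1
  have e2 : j - 1 ≠ j := by rw [← sub_ne_zero]; ring_nf; simpa using h1
  have e3 : j + 1 ≠ i := fun h => hj₁ (by rw [← h, add_sub_cancel_right])
  have e4 : j + 1 ≠ i + 1 := fun h => hj₂ (add_right_cancel h)
  rw [card_le_card_iff_of_sdiff_eq (tokens_update_sdiff _ _ _ _), card_inter_pair e1,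
    card_inter_pair e1]
  simp only [mem_tokens, update_self, update_of_ne e2, update_of_ne e1.symm,
    add_sub_cancel_right]
  revert h
  cases s (j - 1) <;> cases hs : s j <;> cases s (j + 1) <;> simp [e3, e4, hj₂, hj₃]

end Tokens

variable {G : CircleGame n} {L : ℕ} {f : ℕ → Fin n → Bool} {i : Fin n} {k : ℕ}

theorem IsCycle.card_tokens_succ_le (hn : 3 ≤ n) (hf : G.IsCycle L f) (hi : Frozen L f i)
    (hk : k < L) : #(tokens i (f (k + 1))) ≤ #(tokens i (f k)) := by
  obtain ⟨j, -, hupd⟩ := hf.1 k hk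
  have hj : f (k + 1) j ≠ f k j := by simp [hupd]
  have hji : j ≠ i := by rintro rfl; exact hj (hi k hk)
  rw [hupd]
  rcases eq_or_ne j (i + 1) with rfl | hj₃
  · refine (card_tokens_update_lt_of_add_one hn ?_).le
    exact hf.right_ne_of_flip_of_frozen_left (by rwa [add_sub_cancel_right]) hk hj
  rcases eq_or_ne j (i - 1) with rfl | hj₁
  · refine (card_tokens_update_lt_of_sub_one hn ?_).le
    exact hf.left_ne_of_flip_of_frozen_right (by rwa [sub_add_cancel]) hk hj
  exact card_tokens_update_le hn hj₁ hji hj₃ (hf.ne_left_or_ne_right_of_flip hk hj)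

theorem IsCycle.card_tokens_succ_lt (hn : 3 ≤ n) (hf : G.IsCycle L f) (hi : Frozen L f i)
    (hk : k < L) (hflip : f (k + 1) (i + 1) ≠ f k (i + 1)) :
    #(tokens i (f (k + 1))) < #(tokens i (f k)) := by
  rw [((hf.1 k hk).not_currentBR_and_eq_update hflip).2]
  refine card_tokens_update_lt_of_add_one hn ?_
  exact hf.right_ne_of_flip_of_frozen_left (by rwa [add_sub_cancel_right]) hk hflip

theorem IsCycle.frozen_add_one (hf : G.IsCycle L f) (hi : Frozen L f i) :
    Frozen L f (i + 1) := by
  obtain rfl | rfl | hn : n = 1 ∨ n = 2 ∨ 3 ≤ n := by have := NeZero.pos n; omega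
  · rwa [Subsingleton.elim (i + 1) i]
  · have h₁ : i + 1 - 1 = i := add_sub_cancel_right i 1
    have h₂ : i + 1 + 1 = i := by fin_cases i <;> rfl
    exact hf.frozen_of_frozen_left_of_frozen_right (by rwa [h₁]) (by rwa [h₂])
  · intro k hk
    by_contra hflip
    refine (hf.card_tokens_succ_lt hn hi hk hflip).ne ?_
    exact apply_succ_eq_of_succ_le_of_eq (P := fun t => #(tokens i (f t)))
      (fun t ht => hf.card_tokens_succ_le hn hi ht) (by rw [hf.2]) hk

theorem IsCycle.not_frozen (hf : G.IsCycle L f) (hL : 0 < L) (i : Fin n) : ¬ Frozen L f i := by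
  intro hi
  obtain ⟨j, -, hupd⟩ := hf.1 0 hL
  have := Fin.forall_of_imp_add_one hi (fun _ => hf.frozen_add_one) j 0 hL
  simp [hupd] at this

end CircleGame

/-- Let `G` be a player-specific congestion game on a circle whose
transition graph contains a directed cycle. Then every player changes its strategy
at least twice on every directed cycle of `TG(G)`. -/
theorem circle_every_player_changes_twice_on_cycle
    (n : ℕ) [NeZero n] (G : CircleGame n)
    (L : ℕ) (f : ℕ → Fin n → Bool) (hL : 0 < L)
    (hsteps : ∀ k, k < L → G.Step (f k) (f (k + 1)))
    (hcycle : f L = f 0) (i : Fin n) :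
    2 ≤ ((Finset.range L).filter fun k => f (k + 1) i ≠ f k i).card := by
  have heven := (even_card_filter_succ_ne_iff (fun k => f k i) L).2 (congrFun hcycle i)
  have hpos : #{k ∈ range L | f (k + 1) i ≠ f k i} ≠ 0 := by
    rw [Ne, card_eq_zero, filter_eq_empty_iff]
    exact fun h => CircleGame.IsCycle.not_frozen ⟨hsteps, hcycle⟩ hL i
      fun k hk => not_not.1 (h (mem_range.2 hk))
  obtain ⟨m, hm⟩ := heven
  omega
end

section
/- Let Γ be a player-specific congestion game on a circle. If at least one player is of type 1 or of type 1', then the transition graph TG(Γ) is acyclic, and every best response schedule terminates after at most 4n^2 steps (every sequence of best-response steps has length at most 4n^2). -/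
open scoped ENNReal NNReal

/-!
A player's best response depends only on the strategies of its two neighbours, and it is monotone
in both of them: the dynamics is an asynchronous network of monotone Boolean gates `p j x z` on a
circle. Every monotone gate of two inputs is a threshold gate, and the resulting energy
`Φ s = ∑ j, θ j * s j - w j * s j * s (j + 1)` drops by at least one in every step, as soon as the
edge weights satisfy `w (j - 1) ≥ w j + 2` at gates copying their left input and
`w j ≥ w (j - 1) + 2` at gates copying their right input. Around the whole circle these
constraints may be cyclic, but a player of type 1 or 1' has a constant gate and imposes none, so
cutting the circle there leaves a path on which weights `2 ≤ w ≤ 2n` exist. Each player then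
contributes at most `4n` to the range of `Φ`.
-/

section Potential

variable {α : Type*} {r : α → α → Prop}

lemma not_transGen_self_of_decreasing {β : Type*} [Preorder β] (Φ : α → β)
    (hΦ : ∀ a b, r a b → Φ b < Φ a) (a : α) : ¬ Relation.TransGen r a a := by
  have hlt : ∀ b c, Relation.TransGen r b c → Φ c < Φ b := by
    intro b c hbc
    induction hbc with
    | single h => exact hΦ _ _ h
    | tail _ h ih => exact (hΦ _ _ h).trans ih
  exact fun h => lt_irrefl _ (hlt a a h)

lemma chain_length_le_of_decreasing (Φ : α → ℤ) (hΦ : ∀ a b, r a b → Φ b + 1 ≤ Φ a)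
    {M : ℤ} (hM : ∀ a b, Φ a - Φ b ≤ M) (f : ℕ → α) (L : ℕ)
    (hf : ∀ k, k < L → r (f k) (f (k + 1))) : (L : ℤ) ≤ M := by
  have hdrop : ∀ m, m ≤ L → Φ (f m) + m ≤ Φ (f 0) := by
    intro m hm
    induction m with
    | zero => simp
    | succ m ih =>
      have := hΦ _ _ (hf m hm)
      push_cast
      linarith [ih (by omega)]
  linarith [hdrop L le_rfl, hM (f 0) (f L)]

end Potential

namespace CircleGame

variable {n : ℕ}

open Finset

/-- `p j x z` is the strategy player `j` wants when its left neighbour plays `x` and its right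
neighbour plays `z`. -/
def FlipStep [NeZero n] (p : Fin n → Bool → Bool → Bool) (s s' : Fin n → Bool) : Prop :=
  ∃ j, s j ≠ p j (s (j - 1)) (s (j + 1)) ∧ s' = Function.update s j (!s j)

def IsThreshold (q : Bool → Bool → Bool) (θ wl wr : ℤ) : Prop :=
  ∀ x z, if q x z then θ + 1 ≤ wl * x.toInt + wr * z.toInt else wl * x.toInt + wr * z.toInt + 1 ≤ θ

def potentialTerm (θ w : ℤ) (y z : Bool) : ℤ := θ * y.toInt - w * y.toInt * z.toInt

def potential [NeZero n] (θ w : Fin n → ℤ) (s : Fin n → Bool) : ℤ :=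
  ∑ j, potentialTerm (θ j) (w j) (s j) (s (j + 1))

def IsCopyLeft (q : Bool → Bool → Bool) : Prop := q true false = true ∧ q false true = false

def IsCopyRight (q : Bool → Bool → Bool) : Prop := q false true = true ∧ q true false = false

instance : DecidablePred IsCopyLeft := fun _ => inferInstanceAs (Decidable (_ ∧ _))

instance : DecidablePred IsCopyRight := fun _ => inferInstanceAs (Decidable (_ ∧ _))

lemma IsCopyLeft.not_isCopyRight {q : Bool → Bool → Bool} (h : IsCopyLeft q) : ¬ IsCopyRight q :=
  fun h' => absurd h.1 (by simp [h'.2])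

lemma not_isCopyLeft_of_const {q : Bool → Bool → Bool} {c : Bool} (hc : ∀ x z, q x z = c) :
    ¬ IsCopyLeft q := by
  simp [IsCopyLeft, hc]

lemma not_isCopyRight_of_const {q : Bool → Bool → Bool} {c : Bool} (hc : ∀ x z, q x z = c) :
    ¬ IsCopyRight q := by
  simp [IsCopyRight, hc]

lemma exists_isThreshold {q : Bool → Bool → Bool} (hq : Monotone (Function.uncurry q))
    {wl wr : ℤ} (hl : 2 ≤ wl) (hr : 2 ≤ wr)
    (hcopyLeft : IsCopyLeft q → wr + 2 ≤ wl) (hcopyRight : IsCopyRight q → wl + 2 ≤ wr) :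
    ∃ θ, IsThreshold q θ wl wr ∧ ∀ y z y' z', potentialTerm θ wr y z - potentialTerm θ wr y' z' ≤
      1 + wr + if q true false || q false true then 0 else wl := by
  have h1 : q false false ≤ q false true := hq (a := (false, false)) (by decide : _ ≤ (false, true))
  have h2 : q false false ≤ q true false := hq (a := (false, false)) (by decide : _ ≤ (true, false))
  have h3 : q false true ≤ q true true := hq (a := (false, true)) (by decide : _ ≤ (true, true))
  have h4 : q true false ≤ q true true := hq (a := (true, false)) (by decide : _ ≤ (true, true))
  -- the least admissible threshold: one more than the largest weighted input on which `q` fails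
  refine ⟨if q false false then -1 else if !q true true then 1 + wl + wr
    else 1 + max (if q true false then 0 else wl) (if q false true then 0 else wr), ?_, ?_⟩ <;>
  · simp only [IsThreshold, potentialTerm, Bool.forall_bool]
    simp only [IsCopyLeft, IsCopyRight] at hcopyLeft hcopyRight
    revert h1 h2 h3 h4 hcopyLeft hcopyRight
    cases q false false <;> cases q false true <;> cases q true false <;> cases q true true <;>
      simp <;> omega

lemma potential_update_sub [NeZero n] (hn : 1 < n) (θ w : Fin n → ℤ) (s : Fin n → Bool)
    (j : Fin n) :
    potential θ w (Function.update s j (!s j)) - potential θ w s =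
      ((!s j).toInt - (s j).toInt) *
        (θ j - w (j - 1) * (s (j - 1)).toInt - w j * (s (j + 1)).toInt) := by
  have hone : (1 : Fin n) ≠ 0 := by simp [Fin.ext_iff, Nat.mod_eq_of_lt hn]
  have hsucc : j + 1 ≠ j := by simpa using hone
  have hpred : j - 1 ≠ j := by simpa [sub_eq_self] using hone
  rw [potential, potential, ← sum_sub_distrib, Fintype.sum_eq_add j (j - 1) hpred.symm]
  · simp only [potentialTerm, Function.update_self, ne_eq, hsucc, hpred, not_false_eq_true,
      Function.update_of_ne, sub_add_cancel]
    ring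
  · rintro k ⟨hkj, hkj'⟩
    have : k + 1 ≠ j := fun h => hkj' (eq_sub_of_add_eq h)
    simp [hkj, this]

lemma potential_add_one_le_of_flipStep [NeZero n] (hn : 1 < n) {p : Fin n → Bool → Bool → Bool}
    {θ w : Fin n → ℤ} (hθ : ∀ j, IsThreshold (p j) (θ j) (w (j - 1)) (w j))
    {s s' : Fin n → Bool} (h : FlipStep p s s') : potential θ w s' + 1 ≤ potential θ w s := by
  obtain ⟨j, hne, rfl⟩ := h
  have hdiff := potential_update_sub hn θ w s j
  have hj := hθ j (s (j - 1)) (s (j + 1))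
  revert hne hdiff hj
  cases s j <;> cases p j (s (j - 1)) (s (j + 1)) <;> simp <;> intros <;> linarith

lemma potential_sub_le [NeZero n] (θ w : Fin n → ℤ) {B : ℤ}
    (hB : ∀ j y z y' z', potentialTerm (θ j) (w j) y z - potentialTerm (θ j) (w j) y' z' ≤ B)
    (s s' : Fin n → Bool) : potential θ w s - potential θ w s' ≤ n * B := by
  rw [potential, potential, ← sum_sub_distrib]
  simpa using sum_le_sum fun j (_ : j ∈ univ) => hB j (s j) (s (j + 1)) (s' j) (s' (j + 1))

def offset (i0 j : Fin n) : ℕ := (j - i0).val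

lemma offset_inj [NeZero n] {i0 j m : Fin n} : offset i0 m = offset i0 j ↔ m = j := by
  simp [offset, Fin.val_inj]

lemma offset_eq_zero_iff [NeZero n] {i0 j : Fin n} : offset i0 j = 0 ↔ j = i0 := by
  simp [offset, Fin.val_eq_zero_iff, sub_eq_zero]

lemma offset_sub_one [NeZero n] {i0 j : Fin n} (hj : j ≠ i0) :
    offset i0 (j - 1) + 1 = offset i0 j := by
  have hne : j - i0 ≠ 0 := sub_ne_zero.mpr hj
  have hpos : 0 < offset i0 j := Nat.pos_of_ne_zero (mt offset_eq_zero_iff.mp hj)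
  rw [offset, sub_right_comm, Fin.val_sub_one_of_ne_zero hne]
  exact Nat.sub_add_cancel hpos

lemma offset_self_sub_one [NeZero n] (i0 : Fin n) : offset i0 (i0 - 1) = n - 1 := by
  obtain ⟨m, rfl⟩ := Nat.exists_eq_succ_of_ne_zero (NeZero.ne n)
  simp [offset, Fin.coe_neg_one]

section Weight

variable (p : Fin n → Bool → Bool → Bool) (i0 : Fin n)

/-- The circle is cut at `i0`; `weight k`, the weight of the edge from `k` to `k + 1`, counts the
copy-left players after `k` and the copy-right players up to `k`, so that it drops by two across
each copy-left player and rises by two across each copy-right player. -/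
def load (k : Fin n) : Finset (Fin n) :=
  {m | IsCopyLeft (p m) ∧ offset i0 k < offset i0 m ∨ IsCopyRight (p m) ∧ offset i0 m ≤ offset i0 k}

def weight (k : Fin n) : ℤ := 2 + 2 * #(load p i0 k)

variable {p i0} {c : Bool} {j : Fin n}

lemma mem_load_sub_one_iff [NeZero n] {m : Fin n} (hj : j ≠ i0) (hm : m ≠ j) :
    m ∈ load p i0 (j - 1) ↔ m ∈ load p i0 j := by
  have hsub := offset_sub_one hj
  have hne : offset i0 m ≠ offset i0 j := mt offset_inj.mp hm
  have hlt : offset i0 (j - 1) < offset i0 m ↔ offset i0 j < offset i0 m := by omega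
  have hle : offset i0 m ≤ offset i0 (j - 1) ↔ offset i0 m ≤ offset i0 j := by omega
  simp only [load, mem_filter, mem_univ, true_and, hlt, hle]

lemma self_mem_load_sub_one_iff [NeZero n] (hj : j ≠ i0) :
    j ∈ load p i0 (j - 1) ↔ IsCopyLeft (p j) := by
  have hsub := offset_sub_one hj
  simp only [load, mem_filter, mem_univ, true_and]
  constructor
  · rintro (⟨h, -⟩ | ⟨-, h⟩)
    exacts [h, by omega]
  · exact fun h => Or.inl ⟨h, by omega⟩

lemma self_mem_load_iff : j ∈ load p i0 j ↔ IsCopyRight (p j) := by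
  simp [load]

lemma notMem_load (hc : ∀ x z, p i0 x z = c) (k : Fin n) : i0 ∉ load p i0 k := by
  simp [load, not_isCopyLeft_of_const hc, not_isCopyRight_of_const hc]

lemma two_le_weight (k : Fin n) : 2 ≤ weight p i0 k := by
  simp [weight]

lemma weight_le (hc : ∀ x z, p i0 x z = c) (k : Fin n) : weight p i0 k ≤ 2 * n := by
  have hcard := card_le_card (subset_erase.mpr ⟨subset_univ _, notMem_load hc k⟩)
  rw [card_erase_of_mem (mem_univ _), card_univ, Fintype.card_fin] at hcard
  have := k.pos
  rw [weight]
  omega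

lemma weight_sub_one_of_isCopyLeft [NeZero n] (hc : ∀ x z, p i0 x z = c)
    (hj : IsCopyLeft (p j)) : weight p i0 (j - 1) = weight p i0 j + 2 := by
  have hj0 : j ≠ i0 := by rintro rfl; exact not_isCopyLeft_of_const hc hj
  have hload : load p i0 (j - 1) = insert j (load p i0 j) := by
    ext m
    by_cases hm : m = j
    · subst hm; simp [self_mem_load_sub_one_iff hj0, hj]
    · simp [mem_load_sub_one_iff hj0 hm, hm]
  have hnot : j ∉ load p i0 j := by rw [self_mem_load_iff]; exact hj.not_isCopyRight
  rw [weight, weight, hload, card_insert_of_notMem hnot]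
  push_cast
  ring

lemma weight_of_isCopyRight [NeZero n] (hc : ∀ x z, p i0 x z = c) (hj : IsCopyRight (p j)) :
    weight p i0 j = weight p i0 (j - 1) + 2 := by
  have hj0 : j ≠ i0 := by rintro rfl; exact not_isCopyRight_of_const hc hj
  have hload : load p i0 j = insert j (load p i0 (j - 1)) := by
    ext m
    by_cases hm : m = j
    · subst hm; simp [self_mem_load_iff, hj]
    · simp [mem_load_sub_one_iff hj0 hm, hm]
  have hnot : j ∉ load p i0 (j - 1) := by
    rw [self_mem_load_sub_one_iff hj0]; exact fun h => h.not_isCopyRight hj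
  rw [weight, weight, hload, card_insert_of_notMem hnot]
  push_cast
  ring

lemma load_sub_one_of_not_isCopy [NeZero n] (hj0 : j ≠ i0) (hl : ¬ IsCopyLeft (p j))
    (hr : ¬ IsCopyRight (p j)) : load p i0 (j - 1) = load p i0 j := by
  ext m
  by_cases hm : m = j
  · subst hm; simp [self_mem_load_sub_one_iff hj0, self_mem_load_iff, hl, hr]
  · exact mem_load_sub_one_iff hj0 hm

lemma disjoint_load_self_sub_one [NeZero n] (hc : ∀ x z, p i0 x z = c) :
    Disjoint (load p i0 (i0 - 1)) (load p i0 i0) := by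
  rw [disjoint_left]
  intro m hm hm'
  have h0 : offset i0 i0 = 0 := offset_eq_zero_iff.mpr rfl
  simp only [load, mem_filter, mem_univ, true_and, offset_self_sub_one, h0] at hm hm'
  have hlt : offset i0 m < n := (m - i0).isLt
  rcases hm with ⟨-, h⟩ | ⟨hR, -⟩
  · omega
  rcases hm' with ⟨hL, -⟩ | ⟨-, h⟩
  · exact hL.not_isCopyRight hR
  · obtain rfl : m = i0 := offset_eq_zero_iff.mp (by omega)
    exact not_isCopyRight_of_const hc hR

lemma weight_sub_one_add_weight_le [NeZero n] (hn : 2 ≤ n) (hc : ∀ x z, p i0 x z = c)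
    (hl : ¬ IsCopyLeft (p j)) (hr : ¬ IsCopyRight (p j)) :
    weight p i0 (j - 1) + weight p i0 j ≤ 4 * n - 2 := by
  by_cases hj0 : j = i0
  · subst hj0
    have hsub : load p j (j - 1) ∪ load p j j ⊆ univ.erase j := by
      intro m hm
      refine mem_erase.mpr ⟨?_, mem_univ _⟩
      rintro rfl
      rcases mem_union.mp hm with h | h <;> exact notMem_load hc _ h
    have hcard := card_le_card hsub
    rw [card_union_of_disjoint (disjoint_load_self_sub_one hc),
      card_erase_of_mem (mem_univ _), card_univ, Fintype.card_fin] at hcard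
    simp only [weight]
    omega
  · have hsub : load p i0 j ⊆ (univ.erase i0).erase j := by
      intro m hm
      refine mem_erase.mpr ⟨?_, mem_erase.mpr ⟨?_, mem_univ _⟩⟩
      · rintro rfl
        exact hr (self_mem_load_iff.mp hm)
      · rintro rfl
        exact notMem_load hc j hm
    have hcard := card_le_card hsub
    have hj : j ∈ univ.erase i0 := mem_erase.mpr ⟨hj0, mem_univ _⟩
    rw [card_erase_of_mem hj, card_erase_of_mem (mem_univ _), card_univ, Fintype.card_fin] at hcard
    rw [weight, weight, load_sub_one_of_not_isCopy hj0 hl hr]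
    omega

end Weight

variable {p : Fin n → Bool → Bool → Bool} {i0 : Fin n} {c : Bool}

/-- With a single player, only `i0` moves, and after one move it has its constant choice `c`. -/
lemma exists_potential_of_le_one [NeZero n] (hn : n ≤ 1) (hc : ∀ x z, p i0 x z = c) :
    ∃ Φ : (Fin n → Bool) → ℤ,
      (∀ s s', FlipStep p s s' → Φ s' + 1 ≤ Φ s) ∧ ∀ s s', Φ s - Φ s' ≤ 4 * n ^ 2 := by
  have hsub := Fin.subsingleton_iff_le_one.mpr hn
  have hn1 : (1 : ℤ) ≤ n := by exact_mod_cast NeZero.one_le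
  refine ⟨fun s => if s i0 = c then 0 else 1, ?_, fun s s' => ?_⟩
  · rintro s _ ⟨j, hne, rfl⟩
    obtain rfl := Subsingleton.elim j i0
    rw [hc] at hne
    simp [Bool.eq_not.mpr hne]
  · dsimp only
    split_ifs <;> nlinarith

lemma exists_potential_of_two_le [NeZero n] (hn : 2 ≤ n)
    (hp : ∀ j, Monotone (Function.uncurry (p j))) (hc : ∀ x z, p i0 x z = c) :
    ∃ Φ : (Fin n → Bool) → ℤ,
      (∀ s s', FlipStep p s s' → Φ s' + 1 ≤ Φ s) ∧ ∀ s s', Φ s - Φ s' ≤ 4 * n ^ 2 := by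
  choose θ hθ hterm using fun j => exists_isThreshold (hp j) (two_le_weight (j - 1))
    (two_le_weight j) (fun h => (weight_sub_one_of_isCopyLeft hc h).ge)
    (fun h => (weight_of_isCopyRight hc h).ge)
  refine ⟨potential θ (weight p i0), fun s s' h => potential_add_one_le_of_flipStep hn hθ h,
    fun s s' => ?_⟩
  have hB : ∀ j y z y' z', potentialTerm (θ j) (weight p i0 j) y z -
      potentialTerm (θ j) (weight p i0 j) y' z' ≤ 4 * n := by
    intro j y z y' z'
    refine (hterm j y z y' z').trans ?_
    split_ifs with hsingle
    · linarith [weight_le hc j]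
    · simp only [Bool.or_eq_true, not_or, Bool.not_eq_true] at hsingle
      have := weight_sub_one_add_weight_le (j := j) hn hc (by simp [IsCopyLeft, hsingle.1])
        (by simp [IsCopyRight, hsingle.2])
      linarith
  linarith [potential_sub_le θ (weight p i0) hB s s']

lemma exists_potential [NeZero n] (hp : ∀ j, Monotone (Function.uncurry (p j)))
    (hc : ∀ x z, p i0 x z = c) :
    ∃ Φ : (Fin n → Bool) → ℤ,
      (∀ s s', FlipStep p s s' → Φ s' + 1 ≤ Φ s) ∧ ∀ s s', Φ s - Φ s' ≤ 4 * n ^ 2 := by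
  rcases le_or_gt n 1 with hn | hn
  exacts [exists_potential_of_le_one hn hc, exists_potential_of_two_le hn hp hc]

/-- Whether player `j` strictly prefers its 1-strategy when its left neighbour plays `x` (which
loads resource `j` iff `x`) and its right neighbour plays `z` (which loads resource `j + 1` iff
`!z`). -/
def pref (G : CircleGame n) (j : Fin n) (x z : Bool) : Bool :=
  decide (G.d1 j ((!z).toNat + 1) < G.d0 j (x.toNat + 1))

lemma cong_eq [NeZero n] (s : Fin n → Bool) (r : Fin n) :
    cong s r = (!s r).toNat + (s (r - 1)).toNat := by
  unfold cong
  cases s r <;> cases s (r - 1) <;> rfl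

lemma Step.flipStep_pref [NeZero n] {G : CircleGame n} {s s' : Fin n → Bool} (h : G.Step s s') :
    FlipStep G.pref s s' := by
  obtain ⟨j, hbr, rfl⟩ := h
  refine ⟨j, ?_, rfl⟩
  have hj : cong s j = (!s j).toNat + (s (j - 1)).toNat := cong_eq s j
  have hj1 : cong s (j + 1) = (!s (j + 1)).toNat + (s j).toNat := by
    rw [cong_eq, add_sub_cancel_right]
  unfold CurrentBR at hbr
  cases hs : s j
  · simp only [hs, hj, hj1, pref, ↓reduceIte, Bool.not_false, Bool.toNat_true, Bool.toNat_false,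
      add_zero, not_le, ne_eq, false_eq_decide_iff, not_lt] at hbr ⊢
    simpa [add_comm] using hbr
  · simp only [hs, hj, hj1, pref, Bool.true_eq_false, ↓reduceIte, Bool.toNat_true, Bool.not_true,
      Bool.toNat_false, zero_add, not_le, ne_eq, true_eq_decide_iff, not_lt] at hbr ⊢
    simpa [add_comm] using hbr.le

lemma pref_monotone (G : CircleGame n) (j : Fin n) : Monotone (Function.uncurry (G.pref j)) := by
  rintro ⟨x, z⟩ ⟨x', z'⟩ ⟨hx, hz⟩
  dsimp only at hx hz
  have h0 : G.d0 j (x.toNat + 1) ≤ G.d0 j (x'.toNat + 1) :=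
    (G.mono0 j).monotone (Nat.add_le_add_right (Bool.toNat_le_toNat hx) 1)
  have h1 : G.d1 j ((!z').toNat + 1) ≤ G.d1 j ((!z).toNat + 1) :=
    (G.mono1 j).monotone (by revert hz; cases z <;> cases z' <;> decide)
  simp only [Function.uncurry_apply_pair, pref, Bool.le_iff_imp, decide_eq_true_eq]
  omega

lemma pref_eq_false_of_isType1 {G : CircleGame n} {i : Fin n} (h : G.IsType1 i) (x z : Bool) :
    G.pref i x z = false := by
  have h0 := (G.mono0 i).monotone (Nat.add_le_add_right (Bool.toNat_le x) 1)
  have h1 := (G.mono1 i).monotone (Nat.le_add_left 1 (!z).toNat)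
  simp only [pref, decide_eq_false_iff_not, not_lt]
  exact (h0.trans_lt h.2.1).le.trans h1

lemma pref_eq_true_of_isType1' {G : CircleGame n} {i : Fin n} (h : G.IsType1' i) (x z : Bool) :
    G.pref i x z = true := by
  have h0 := (G.mono0 i).monotone (Nat.le_add_left 1 x.toNat)
  have h1 := (G.mono1 i).monotone (Nat.add_le_add_right (Bool.toNat_le (!z)) 1)
  simp only [pref, decide_eq_true_eq]
  exact (h1.trans_lt h.2.1).trans_le h0

end CircleGame

/-- If in a player-specific congestion game on a circle at least one player
is of type 1 or of type 1', then the transition graph is acyclic and every best response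
schedule terminates after at most `4n^2` steps. -/
theorem circle_type1_acyclic_and_terminates
    (n : ℕ) [NeZero n] (G : CircleGame n)
    (h : ∃ i, G.IsType1 i ∨ G.IsType1' i) :
    (∀ s : Fin n → Bool, ¬ Relation.TransGen G.Step s s) ∧
    (∀ (L : ℕ) (f : ℕ → Fin n → Bool),
      (∀ k, k < L → G.Step (f k) (f (k + 1))) → L ≤ 4 * n ^ 2) := by
  obtain ⟨i0, hi0⟩ := h
  obtain ⟨c, hc⟩ : ∃ c, ∀ x z, G.pref i0 x z = c := hi0.elim
    (fun h => ⟨false, CircleGame.pref_eq_false_of_isType1 h⟩)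
    (fun h => ⟨true, CircleGame.pref_eq_true_of_isType1' h⟩)
  obtain ⟨Φ, hΦ, hrange⟩ := CircleGame.exists_potential G.pref_monotone hc
  have hstep : ∀ s s', G.Step s s' → Φ s' + 1 ≤ Φ s := fun s s' h => hΦ s s' h.flipStep_pref
  refine ⟨not_transGen_self_of_decreasing Φ fun s s' h => Int.add_one_le_iff.mp (hstep s s' h),
    fun L f hf => ?_⟩
  exact_mod_cast chain_length_le_of_decreasing Φ hstep hrange f L hf
end

section
/- In a player-specific congestion game on a circle, suppose player i is not of type 1 and not of type 1'. If in a state S player i is synchronized with player i−1 and with player i+1 (indices mod n), then player i's current resource is a best response to S, i.e., player i has no incentive to change its strategy. -/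
open scoped ENNReal NNReal

/-- In a player-specific congestion game on a circle, suppose player `i` is
not of type 1 and not of type 1'. If in a state `s` player `i` is synchronized with
player `i-1` and with player `i+1`, then player `i`'s current resource is a best
response to `s`. -/
theorem circle_synchronized_no_incentive
    (n : ℕ) [NeZero n] (G : CircleGame n) (i : Fin n)
    (h1 : ¬ G.IsType1 i) (h1' : ¬ G.IsType1' i)
    (s : Fin n → Bool)
    (hleft : s (i - 1) = s i) (hright : s i = s (i + 1)) :
    G.CurrentBR s i := by
  have hmid : i + 1 - 1 = i := by simp
  unfold CircleGame.CurrentBR CircleGame.cong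
  rw [hmid, hleft, ← hright]
  cases h : s i with
  | false =>
    simp only [h]
    norm_num
    by_contra hlt
    push_neg at hlt
    exact h1' ⟨G.mono1 i one_lt_two, hlt, G.mono0 i one_lt_two⟩
  | true =>
    simp only [h]
    norm_num
    by_contra hlt
    push_neg at hlt
    exact h1 ⟨G.mono0 i one_lt_two, hlt, G.mono1 i one_lt_two⟩
end

section
/- Let Γ be a player-specific congestion game on a circle with n ≥ 3 players in which every player is of type 3. Then Γ has exactly two Nash equilibria: the state in which all players play their 0-strategy and the state in which all players play their 1-strategy. -/
open scoped ENNReal NNReal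

/-!
In a state that is not constant, going around the circle one finds a player `i` on its
0-strategy whose predecessor is on its 1-strategy. Resource `i` then carries two players
while resource `i+1` carries at most one more after a switch, so player `i` improves from
`d0 i 2` to at most `d1 i 2`. In a constant state every resource carries exactly one player,
and a deviation costs the delay at congestion 2 on the other resource, which type 3 makes
larger than the current delay at congestion 1.
-/

open Fin.NatCast in
theorem Fin.exists_pred_eq_true_and_eq_false {n : ℕ} [NeZero n] {f : Fin n → Bool}
    {j k : Fin n} (hj : f j = true) (hk : f k = false) : ∃ i, f (i - 1) = true ∧ f i = false := by
  by_contra! h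
  have htrue : ∀ m : ℕ, f (j + (m : Fin n)) = true := by
    intro m
    induction m with
    | zero => simpa using hj
    | succ m ih => simpa using h (j + ((m + 1 : ℕ) : Fin n)) (by simpa [← add_assoc] using ih)
  simpa [hk] using htrue (k - j).val

namespace CircleGame

variable {n : ℕ} [NeZero n]

theorem cong_of_forall_eq {s : Fin n → Bool} {b : Bool} (hs : ∀ i, s i = b) (r : Fin n) :
    cong s r = 1 := by
  cases b <;> simp [cong, hs]

theorem cong_eq_two {s : Fin n → Bool} {i : Fin n} (hpred : s (i - 1) = true)
    (hi : s i = false) : cong s i = 2 := by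
  simp [cong, hpred, hi]

theorem cong_succ_le_one {s : Fin n → Bool} {i : Fin n} (hi : s i = false) :
    cong s (i + 1) ≤ 1 := by
  simp only [cong, add_sub_cancel_right, hi, Bool.false_eq_true, if_false, add_zero]
  split <;> omega

variable (G : CircleGame n) {s : Fin n → Bool} {i : Fin n}

theorem not_currentBR_of_pred_eq_true (hd : G.d1 i 2 < G.d0 i 2) (hpred : s (i - 1) = true)
    (hi : s i = false) : ¬ G.CurrentBR s i := by
  rw [CurrentBR, if_pos hi, cong_eq_two hpred hi, not_le]
  calc G.d1 i (cong s (i + 1) + 1) ≤ G.d1 i 2 :=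
        (G.mono1 i).monotone (by have := cong_succ_le_one hi; omega)
    _ < G.d0 i 2 := hd

theorem currentBR_of_forall_false (hd : G.d0 i 1 ≤ G.d1 i 2) (hs : ∀ j, s j = false) :
    G.CurrentBR s i := by
  simpa [CurrentBR, hs i, cong_of_forall_eq hs] using hd

theorem currentBR_of_forall_true (hd : G.d1 i 1 ≤ G.d0 i 2) (hs : ∀ j, s j = true) :
    G.CurrentBR s i := by
  simpa [CurrentBR, hs i, cong_of_forall_eq hs] using hd

end CircleGame

theorem circle_type3_exactly_two_nash_general
    (n : ℕ) [NeZero n] (G : CircleGame n)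
    (h3 : ∀ i, G.IsType3 i) (s : Fin n → Bool) :
    G.IsNash s ↔ ((∀ i, s i = false) ∨ (∀ i, s i = true)) := by
  constructor
  · intro hNash
    by_contra! hs
    obtain ⟨⟨j, hj⟩, k, hk⟩ := hs
    obtain ⟨i, hpred, hi⟩ :=
      Fin.exists_pred_eq_true_and_eq_false (by simpa using hj) (by simpa using hk)
    exact G.not_currentBR_of_pred_eq_true (h3 i).2.2 hpred hi (hNash i)
  · rintro (hs | hs) i
    · exact G.currentBR_of_forall_false ((h3 i).1.trans (h3 i).2.1).le hs
    · exact G.currentBR_of_forall_true ((h3 i).2.1.trans (h3 i).2.2).le hs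

/-- A player-specific congestion game on a circle with `n ≥ 3` players in
which every player is of type 3 has exactly two Nash equilibria: the state in which all
players play their 0-strategy and the state in which all players play their 1-strategy. -/
theorem circle_type3_exactly_two_nash
    (n : ℕ) [NeZero n] (hn : 3 ≤ n) (G : CircleGame n)
    (h3 : ∀ i, G.IsType3 i) (s : Fin n → Bool) :
    G.IsNash s ↔ ((∀ i, s i = false) ∨ (∀ i, s i = true)) :=
  circle_type3_exactly_two_nash_general n G h3 s
end

section
/- Let Γ be a player-specific congestion game on a circle with n ≥ 3 players in which every player is of type 3. Then in every state S, the current resource of player i is NOT a best response if and only if player i−1 (mod n) plays a different strategy than player i; equivalently, in every maximal synchronized set of consecutive players, only the first player clockwise has an incentive to change its strategy. -/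
open scoped ENNReal NNReal

/-- In a circle game with `n ≥ 3` players, all of type 3, in every state `s`
the current resource of player `i` is NOT a best response iff player `i-1` plays a
different strategy than player `i`. -/
theorem circle_type3_unsatisfied_iff_desynchronized
    (n : ℕ) [NeZero n] (hn : 3 ≤ n) (G : CircleGame n)
    (h3 : ∀ i, G.IsType3 i) (s : Fin n → Bool) (i : Fin n) :
    ¬ G.CurrentBR s i ↔ s (i - 1) ≠ s i := by
  obtain ⟨h1, h2, h4⟩ := h3 i
  unfold CircleGame.CurrentBR CircleGame.cong
  rcases hs : s i <;> rcases hp : s (i - 1) <;> rcases hq : s (i + 1) <;>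
    simp [hs, hp, hq, add_sub_cancel_right] <;> omega
end

section
/- In every player-specific congestion game on a circle with n ≥ 3 players in which every player is of type 3, and in every state which is not a Nash equilibrium, the number of players whose best response is to change from their 0-strategy to their 1-strategy equals the number of players whose best response is to change from their 1-strategy to their 0-strategy. -/
open scoped ENNReal NNReal

/-! A type-3 player wants to use its 0-resource exactly when it would be alone there,
whatever the congestion of its 1-resource. Since resource `i` is shared by players `i - 1` and
`i`, player `i` is unsatisfied exactly when its strategy differs from that of player `i - 1`.
The two kinds of unsatisfied players are therefore the `1 → 0` and the `0 → 1` changes of the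
cyclic sequence of strategies, and these occur equally often. -/

namespace Set

variable {α : Type*} [Finite α]

theorem ncard_diff_preimage_perm (σ : Equiv.Perm α) (s : Set α) :
    (s \ σ ⁻¹' s).ncard = (σ ⁻¹' s \ s).ncard := by
  have hs := ncard_inter_add_ncard_sdiff_eq_ncard s (σ ⁻¹' s)
  have hσs := ncard_inter_add_ncard_sdiff_eq_ncard (σ ⁻¹' s) s
  have hcard : (σ ⁻¹' s).ncard = s.ncard :=
    ncard_preimage_of_injective_subset_range σ.injective (by simp)
  rw [inter_comm] at hσs
  omega

end Set

namespace CircleGame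

variable {n : ℕ} [NeZero n]

theorem not_currentBR_iff_of_isType3 (G : CircleGame n) {i : Fin n} (hi : G.IsType3 i)
    (s : Fin n → Bool) : ¬ G.CurrentBR s i ↔ s (i - 1) ≠ s i := by
  obtain ⟨h01, h11, h12⟩ := hi
  unfold CurrentBR cong
  rw [add_sub_cancel_right]
  cases s i <;> cases s (i - 1) <;> cases s (i + 1) <;> simp <;> omega

end CircleGame

theorem circle_type3_balanced_unsatisfied_general
    (n : ℕ) [NeZero n] (G : CircleGame n)
    (h3 : ∀ i, G.IsType3 i) (s : Fin n → Bool) :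
    {i : Fin n | ¬ G.CurrentBR s i ∧ s i = false}.ncard =
      {i : Fin n | ¬ G.CurrentBR s i ∧ s i = true}.ncard := by
  let left : Equiv.Perm (Fin n) := Equiv.subRight 1
  have hunsat (i : Fin n) : ¬ G.CurrentBR s i ↔ s (left i) ≠ s i :=
    G.not_currentBR_iff_of_isType3 (h3 i) s
  have hfalse : {i | ¬ G.CurrentBR s i ∧ s i = false} = left ⁻¹' {i | s i} \ {i | s i} := by
    ext i
    simp only [Set.mem_ofPred_eq, Set.mem_sdiff, Set.mem_preimage, hunsat]
    cases s i <;> cases s (left i) <;> simp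
  have htrue : {i | ¬ G.CurrentBR s i ∧ s i = true} = {i | s i} \ left ⁻¹' {i | s i} := by
    ext i
    simp only [Set.mem_ofPred_eq, Set.mem_sdiff, Set.mem_preimage, hunsat]
    cases s i <;> cases s (left i) <;> simp
  rw [hfalse, htrue, Set.ncard_diff_preimage_perm]

/-- In every circle game with `n ≥ 3` players, all of type 3, and every
state that is not a Nash equilibrium, the number of players whose best response is to
change from their 0- to their 1-strategy equals the number of players whose best
response is to change from their 1- to their 0-strategy. -/
theorem circle_type3_balanced_unsatisfied
    (n : ℕ) [NeZero n] (hn : 3 ≤ n) (G : CircleGame n)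
    (h3 : ∀ i, G.IsType3 i) (s : Fin n → Bool) (hs : ¬ G.IsNash s) :
    {i : Fin n | ¬ G.CurrentBR s i ∧ s i = false}.ncard =
      {i : Fin n | ¬ G.CurrentBR s i ∧ s i = true}.ncard :=
  circle_type3_balanced_unsatisfied_general n G h3 s
end

section
/- For every n ≥ 3, the transition graph of any player-specific congestion game on a circle with n players in which every player is of type 3 contains a directed cycle; in particular, the best response dynamics on circles can cycle. -/
open scoped ENNReal NNReal

/-!
Start in the state where only player `i` uses its 1-strategy, so that resource `i + 1` carries
two players and resource `i` none. Player `i + 1` is of type 3, so it prefers its 1-strategy at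
congestion 2 (shared with player `i + 2`) to its 0-strategy at congestion 2 and moves on. Now
player `i` is alone on resource `i + 1` while resource `i` is empty, and since it prefers its
0-strategy at congestion 1 to its 1-strategy at congestion 1 it moves back. The result is the
same kind of state with `i + 1` in place of `i`, so after `n` rounds of these two best-response
steps the dynamics is back where it started.
-/

namespace Relation

theorem transGen_self_of_forall_fin_add_one {α : Type*} {R : α → α → Prop} {n : ℕ}
    [NeZero n] (f : Fin n → α) (h : ∀ i, TransGen R (f i) (f (i + 1))) :
    TransGen R (f 0) (f 0) := by
  open Fin.NatCast in
  have reach : ∀ k : ℕ, TransGen R (f 0) (f ((k + 1 : ℕ) : Fin n)) := by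
    intro k
    induction k with
    | zero => simpa using h 0
    | succ k ih => simpa [Nat.cast_succ] using ih.trans (h _)
  simpa [Nat.sub_add_cancel (NeZero.one_le : 1 ≤ n)] using reach (n - 1)

end Relation

namespace Fin

variable {n : ℕ} [NeZero n]

theorem one_add_one_ne_zero_of_two_lt (hn : 2 < n) : (1 + 1 : Fin n) ≠ 0 := by
  simp [Fin.ext_iff, Fin.val_add, Nat.mod_eq_of_lt (by omega : 1 < n), Nat.mod_eq_of_lt hn]

theorem add_one_ne_self_of_one_lt (hn : 1 < n) (i : Fin n) : i + 1 ≠ i := by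
  rw [Ne, add_eq_left, Fin.one_eq_zero_iff]
  omega

theorem sub_one_ne_self_of_one_lt (hn : 1 < n) (i : Fin n) : i - 1 ≠ i := by
  rw [Ne, sub_eq_self, Fin.one_eq_zero_iff]
  omega

theorem add_one_add_one_ne_self_of_two_lt (hn : 2 < n) (i : Fin n) : i + 1 + 1 ≠ i := by
  rw [add_assoc, Ne, add_eq_left]
  exact one_add_one_ne_zero_of_two_lt hn

theorem sub_one_ne_add_one_of_two_lt (hn : 2 < n) (i : Fin n) : i - 1 ≠ i + 1 := by
  rw [Ne, sub_eq_iff_eq_add, add_assoc, left_eq_add]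
  exact one_add_one_ne_zero_of_two_lt hn

end Fin

namespace CircleGame

variable {n : ℕ} [NeZero n]

def oneAt (i : Fin n) : Fin n → Bool := fun j => decide (j = i)

def oneAtPair (i : Fin n) : Fin n → Bool := fun j => decide (j = i) || decide (j = i + 1)

theorem cong_oneAt_add_one (hn : 1 < n) (i : Fin n) : cong (oneAt i) (i + 1) = 2 := by
  simp [cong, oneAt, Fin.add_one_ne_self_of_one_lt hn i]

theorem cong_oneAt_add_one_add_one (hn : 2 < n) (i : Fin n) :
    cong (oneAt i) (i + 1 + 1) = 1 := by
  simp [cong, oneAt, Fin.add_one_add_one_ne_self_of_two_lt hn i,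
    Fin.add_one_ne_self_of_one_lt (by omega) i]

theorem cong_oneAtPair_self (hn : 2 < n) (i : Fin n) : cong (oneAtPair i) i = 0 := by
  simp [cong, oneAtPair, Fin.sub_one_ne_self_of_one_lt (by omega) i,
    Fin.sub_one_ne_add_one_of_two_lt hn i]

theorem cong_oneAtPair_add_one (i : Fin n) : cong (oneAtPair i) (i + 1) = 1 := by
  simp [cong, oneAtPair]

theorem step_oneAt_oneAtPair (hn : 2 < n) (G : CircleGame n) (i : Fin n)
    (h : G.d1 (i + 1) 2 < G.d0 (i + 1) 2) : G.Step (oneAt i) (oneAtPair i) := by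
  have hplays0 : oneAt i (i + 1) = false := by
    simp [oneAt, Fin.add_one_ne_self_of_one_lt (by omega) i]
  refine ⟨i + 1, ?_, ?_⟩
  · rw [CurrentBR, if_pos hplays0, cong_oneAt_add_one (by omega), cong_oneAt_add_one_add_one hn]
    exact not_le.mpr h
  · funext j
    by_cases hj : j = i + 1
    · simp [hj, oneAtPair, hplays0]
    · simp [hj, oneAt, oneAtPair]

theorem step_oneAtPair_oneAt_add_one (hn : 2 < n) (G : CircleGame n) (i : Fin n)
    (h : G.d0 i 1 < G.d1 i 1) : G.Step (oneAtPair i) (oneAt (i + 1)) := by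
  have hplays1 : oneAtPair i i = true := by simp [oneAtPair]
  refine ⟨i, ?_, ?_⟩
  · rw [CurrentBR, if_neg (by simp [hplays1]), cong_oneAtPair_add_one, cong_oneAtPair_self hn]
    exact not_le.mpr h
  · funext j
    by_cases hj : j = i
    · simp [hj, oneAt, hplays1, (Fin.add_one_ne_self_of_one_lt (by omega) i).symm]
    · simp [hj, oneAt, oneAtPair]

end CircleGame

/-- For every `n ≥ 3`, the transition graph of any player-specific
congestion game on a circle with `n` players in which every player is of type 3
contains a directed cycle. -/
theorem circle_type3_transition_graph_has_cycle
    (n : ℕ) [NeZero n] (hn : 3 ≤ n) (G : CircleGame n)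
    (h3 : ∀ i, G.IsType3 i) :
    ∃ s : Fin n → Bool, Relation.TransGen G.Step s s := by
  refine ⟨CircleGame.oneAt 0,
    Relation.transGen_self_of_forall_fin_add_one CircleGame.oneAt fun i => ?_⟩
  exact .tail (.single (CircleGame.step_oneAt_oneAtPair hn G i (h3 (i + 1)).2.2))
    (CircleGame.step_oneAtPair_oneAt_add_one hn G i (h3 i).1)
end

section
/- There exists a constant C > 0 such that the following holds. Let Γ be a player-specific congestion game on a circle with n players in which no player is of type 1 or 1', and suppose there exist termination points for exactly one kind of token (i.e., there is a termination point for overload tokens but none for underload tokens, or vice versa). Then the transition graph TG(Γ) is acyclic and every best response schedule terminates after at most C·n^2 steps. -/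
open scoped ENNReal NNReal

/-!
If no player is of type 1 or 1', the best response of a player depends only on its two
neighbours: it agrees with them when they agree, and otherwise it is fixed by whether the player
prefers its 1-strategy when both of its resources carry load `1`, resp. load `2`. Underload
(overload) termination points are exactly the places where the first (second) preference switches
from `false` to `true` (from `true` to `false`) around the circle. With termination points for only
one kind of token, one preference is therefore constant and the other takes both values. Up to
reflecting the circle and complementing the state, every player then either copies its left
neighbour or takes the conjunction of both neighbours, and some player does the latter. A descent
`true, false` of the state only moves right through copying players and dies at the next
conjunction player, so the number of `true` sites plus, for each descent, twice one more than its
distance to that player decreases with every step; it is at most `2 n²`.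
-/

namespace Relation

variable {α β : Type*}

def HasBoundedPotential (r : α → α → Prop) (B : ℕ) : Prop :=
  ∃ φ : α → ℕ, (∀ a, φ a ≤ B) ∧ ∀ a b, r a b → φ b < φ a

namespace HasBoundedPotential

variable {r : α → α → Prop} {B : ℕ}

theorem comap {r' : β → β → Prop} (h : HasBoundedPotential r' B) (F : α → β)
    (hF : ∀ a b, r a b → r' (F a) (F b)) : HasBoundedPotential r B :=
  let ⟨φ, hφB, hφ⟩ := h
  ⟨φ ∘ F, fun a => hφB (F a), fun a b hab => hφ _ _ (hF a b hab)⟩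

theorem not_transGen_self (h : HasBoundedPotential r B) (a : α) : ¬ TransGen r a a := by
  obtain ⟨φ, -, hφ⟩ := h
  have lt : ∀ {a b}, TransGen r a b → φ b < φ a := by
    intro a b hab
    induction hab with
    | single hab => exact hφ _ _ hab
    | tail _ hbc ih => exact (hφ _ _ hbc).trans ih
  exact fun hcyc => lt_irrefl _ (lt hcyc)

theorem length_le (h : HasBoundedPotential r B) {L : ℕ} {f : ℕ → α}
    (hf : ∀ k, k < L → r (f k) (f (k + 1))) : L ≤ B := by
  obtain ⟨φ, hφB, hφ⟩ := h
  have descent : ∀ k ≤ L, φ (f k) + k ≤ φ (f 0) := by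
    intro k hk
    induction k with
    | zero => simp
    | succ k ih =>
      have := hφ _ _ (hf k hk)
      have := ih (by omega)
      omega
  have := descent L le_rfl
  have := hφB (f 0)
  omega

end HasBoundedPotential

end Relation

namespace Fin

open Fin.NatCast

variable {n : ℕ} [NeZero n]

theorem forall_of_forall_sub_one_imp {P : Fin n → Prop} (h : ∀ i, P (i - 1) → P i) {j : Fin n}
    (hj : P j) (i : Fin n) : P i := by
  have reach : ∀ k : ℕ, P (j + k) := by
    intro k
    induction k with
    | zero => simpa using hj
    | succ k ih => exact h _ (by rwa [Nat.cast_succ, ← add_assoc, add_sub_cancel_right])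
  simpa using reach (i - j : Fin n)

theorem exists_forall_eq_of_forall_sub_one_imp {x : Fin n → Bool} {c : Bool}
    (h : ∀ i, x (i - 1) = c → x i = c) : ∃ d, ∀ i, x i = d := by
  by_cases hc : ∃ j, x j = c
  · obtain ⟨j, hj⟩ := hc
    exact ⟨c, forall_of_forall_sub_one_imp h hj⟩
  · exact ⟨!c, fun i => Bool.eq_not_of_ne (not_exists.mp hc i)⟩

theorem sum_update_adjacent {α M : Type*} [AddCommMonoid M] (hn : 2 ≤ n)
    (w : Fin n → α → α → M) (s : Fin n → α) (i : Fin n) (b : α) :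
    ∑ j, w j (Function.update s i b (j - 1)) (Function.update s i b j) +
        (w i (s (i - 1)) (s i) + w (i + 1) (s i) (s (i + 1))) =
      ∑ j, w j (s (j - 1)) (s j) + (w i (s (i - 1)) b + w (i + 1) b (s (i + 1))) := by
  have hsucc : i + 1 ≠ i := add_ne_left.mpr fun h => by
    have := Fin.one_eq_zero_iff.mp h
    omega
  have hpred : i - 1 ≠ i := fun h => hsucc (by rw [← h, sub_add_cancel, h])
  have hmem : i + 1 ∈ Finset.univ.erase i := Finset.mem_erase.mpr ⟨hsucc, Finset.mem_univ _⟩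
  have split : ∀ t : Fin n → α, ∑ j, w j (t (j - 1)) (t j) =
      ∑ j ∈ (Finset.univ.erase i).erase (i + 1), w j (t (j - 1)) (t j) +
        w (i + 1) (t i) (t (i + 1)) + w i (t (i - 1)) (t i) := by
    intro t
    rw [← Finset.sum_erase_add _ _ (Finset.mem_univ i), ← Finset.sum_erase_add _ _ hmem,
      add_sub_cancel_right]
  have rest : ∑ j ∈ (Finset.univ.erase i).erase (i + 1),
      w j (Function.update s i b (j - 1)) (Function.update s i b j) =
      ∑ j ∈ (Finset.univ.erase i).erase (i + 1), w j (s (j - 1)) (s j) := by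
    refine Finset.sum_congr rfl fun j hj => ?_
    obtain ⟨hj1, hj0⟩ : j ≠ i + 1 ∧ j ≠ i := by simpa using hj
    rw [Function.update_of_ne hj0,
      Function.update_of_ne fun h => hj1 (by rw [← h, sub_add_cancel])]
  rw [split s, split (Function.update s i b), rest, Function.update_self,
    Function.update_of_ne hsucc, Function.update_of_ne hpred]
  abel

end Fin

namespace BoolCircle

def reply (x y l r : Bool) : Bool := if l = r then l else if l then y else x

theorem reply_swap (x y l r : Bool) : reply x y l r = reply y x r l := by
  cases x <;> cases y <;> cases l <;> cases r <;> rfl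

theorem not_reply_not (x y l r : Bool) : (!reply x y (!l) (!r)) = reply (!y) (!x) l r := by
  cases x <;> cases y <;> cases l <;> cases r <;> rfl

variable {n : ℕ} [NeZero n]

def FlipStep (x y s s' : Fin n → Bool) : Prop :=
  ∃ i, s i ≠ reply (x i) (y i) (s (i - 1)) (s (i + 1)) ∧ s' = Function.update s i (!s i)

variable {x y s s' : Fin n → Bool}

theorem FlipStep.reflect (h : FlipStep x y s s') :
    FlipStep (fun i => y (-i)) (fun i => x (-i)) (fun i => s (-i)) (fun i => s' (-i)) := by
  obtain ⟨i, hi, rfl⟩ := h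
  refine ⟨-i, ?_, ?_⟩
  · show s (- -i) ≠ reply (y (- -i)) (x (- -i)) (s (-(-i - 1))) (s (-(-i + 1)))
    rwa [neg_neg, show -(-i - 1) = i + 1 by abel, show -(-i + 1) = i - 1 by abel, ← reply_swap]
  · funext j
    simp only [Function.update_apply, neg_eq_iff_eq_neg, neg_neg]

theorem FlipStep.compl (h : FlipStep x y s s') :
    FlipStep (fun i => !y i) (fun i => !x i) (fun i => !s i) (fun i => !s' i) := by
  obtain ⟨i, hi, rfl⟩ := h
  refine ⟨i, ?_, ?_⟩
  · show (!s i) ≠ reply (!y i) (!x i) (!s (i - 1)) (!s (i + 1))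
    rw [← not_reply_not, Bool.not_not, Bool.not_not]
    simpa using hi
  · funext j
    by_cases hj : j = i <;> simp [hj]

open Fin.NatCast

noncomputable def distFalse (y : Fin n → Bool) (i : Fin n) : ℕ :=
  sInf {k : ℕ | y (i + k) = false}

theorem distFalse_lt (hy : ∃ j, y j = false) (i : Fin n) : distFalse y i < n := by
  obtain ⟨j, hj⟩ := hy
  have hmem : y (i + (((j - i : Fin n) : ℕ) : Fin n)) = false := by simpa using hj
  exact (Nat.sInf_le hmem).trans_lt (Fin.is_lt _)

theorem distFalse_eq_zero {i : Fin n} (hi : y i = false) : distFalse y i = 0 :=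
  Nat.eq_zero_of_le_zero (Nat.sInf_le (show y (i + (0 : ℕ)) = false by simpa using hi))

theorem distFalse_eq_succ (hy : ∃ j, y j = false) {i : Fin n} (hi : y i = true) :
    distFalse y i = distFalse y (i + 1) + 1 := by
  have mem : ∀ i, y (i + (distFalse y i : ℕ)) = false := fun i => by
    obtain ⟨j, hj⟩ := hy
    exact Nat.sInf_mem (s := {k : ℕ | y (i + k) = false}) ⟨(j - i : Fin n), by simpa using hj⟩
  apply le_antisymm
  · refine Nat.sInf_le ?_
    simpa [add_assoc, add_comm (1 : Fin n)] using mem (i + 1)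
  · obtain ⟨d, hd⟩ : ∃ d, distFalse y i = d + 1 :=
      Nat.exists_eq_add_one.mpr (Nat.pos_of_ne_zero fun h0 => by simpa [h0, hi] using mem i)
    rw [hd, Nat.add_le_add_iff_right]
    refine Nat.sInf_le ?_
    simpa [hd, add_assoc, add_comm (1 : Fin n)] using mem i

noncomputable def weight (y : Fin n → Bool) (j : Fin n) (l b : Bool) : ℕ :=
  if b then 1 else if l then 2 * (distFalse y j + 1) else 0

noncomputable def potential (y s : Fin n → Bool) : ℕ :=
  ∑ j, weight y j (s (j - 1)) (s j)

theorem potential_le (hy : ∃ j, y j = false) (s : Fin n → Bool) :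
    potential y s ≤ 2 * n ^ 2 := by
  have hweight : ∀ j ∈ Finset.univ, weight y j (s (j - 1)) (s j) ≤ 2 * n := fun j _ => by
    have := distFalse_lt hy j
    unfold weight
    split_ifs <;> omega
  calc potential y s ≤ Finset.univ.card • (2 * n) := Finset.sum_le_card_nsmul _ _ _ hweight
    _ = 2 * n ^ 2 := by simp [sq]; ring

theorem weight_flip_lt (hy : ∃ j, y j = false) {i : Fin n} {l b r : Bool}
    (hb : b ≠ reply false (y i) l r) :
    weight y i l (!b) + weight y (i + 1) (!b) r < weight y i l b + weight y (i + 1) b r := by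
  unfold weight
  cases hi : y i
  · rw [distFalse_eq_zero hi]
    cases l <;> cases b <;> cases r <;> simp_all [reply]
    omega
  · rw [distFalse_eq_succ hy hi]
    cases l <;> cases b <;> cases r <;> simp_all [reply]
    omega

theorem potential_lt (hn : 2 ≤ n) (hx : ∀ i, x i = false) (hy : ∃ j, y j = false)
    (h : FlipStep x y s s') : potential y s' < potential y s := by
  obtain ⟨i, hi, rfl⟩ := h
  rw [hx] at hi
  have := Fin.sum_update_adjacent hn (weight y) s i (!s i)
  have := weight_flip_lt hy hi
  unfold potential
  omega

theorem hasBoundedPotential (hn : 2 ≤ n)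
    (h : (∃ c, (∀ i, x i = c) ∧ ∃ i, y i = c) ∨ (∃ c, (∀ i, y i = c) ∧ ∃ i, x i = c)) :
    Relation.HasBoundedPotential (FlipStep x y) (2 * n ^ 2) := by
  have base : ∀ {x y : Fin n → Bool}, (∀ i, x i = false) → (∃ i, y i = false) →
      Relation.HasBoundedPotential (FlipStep x y) (2 * n ^ 2) := fun hx hy =>
    ⟨potential _, potential_le hy, fun _ _ => potential_lt hn hx hy⟩
  rcases h with ⟨_ | _, hx, i, hi⟩ | ⟨_ | _, hy, i, hi⟩
  · exact base hx ⟨i, hi⟩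
  · exact (base (fun j => by simp [hx]) ⟨-i, by simp [hi]⟩).comap _
      fun _ _ h => h.compl.reflect
  · exact (base (fun j => hy _) ⟨-i, by simp [hi]⟩).comap _ fun _ _ h => h.reflect
  · exact (base (fun j => by simp [hy]) ⟨i, by simp [hi]⟩).comap _ fun _ _ h => h.compl

end BoolCircle

namespace CircleGame

variable {n : ℕ}

def prefersOne (G : CircleGame n) (i : Fin n) (k : ℕ) : Bool := decide (G.d1 i k < G.d0 i k)

theorem delay_order {G : CircleGame n} (hn : 2 ≤ n) {i : Fin n} (h1 : ¬ G.IsType1 i)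
    (h1' : ¬ G.IsType1' i) :
    G.d0 i 1 < G.d0 i 2 ∧ G.d1 i 1 < G.d1 i 2 ∧ G.d1 i 1 < G.d0 i 2 ∧ G.d0 i 1 < G.d1 i 2 ∧
      G.d0 i 1 ≠ G.d1 i 1 ∧ G.d0 i 2 ≠ G.d1 i 2 := by
  have := G.tie i 1 le_rfl (by omega) 1 le_rfl (by omega)
  have := G.tie i 1 le_rfl (by omega) 2 (by omega) hn
  have := G.tie i 2 (by omega) hn 1 le_rfl (by omega)
  have := G.tie i 2 (by omega) hn 2 (by omega) hn
  have := G.mono0 i one_lt_two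
  have := G.mono1 i one_lt_two
  unfold IsType1 at h1
  unfold IsType1' at h1'
  omega

variable [NeZero n] {G : CircleGame n}

theorem not_currentBR_iff (hn : 2 ≤ n) {i : Fin n} (h1 : ¬ G.IsType1 i) (h1' : ¬ G.IsType1' i)
    (s : Fin n → Bool) :
    ¬ G.CurrentBR s i ↔
      s i ≠ BoolCircle.reply (G.prefersOne i 1) (G.prefersOne i 2) (s (i - 1)) (s (i + 1)) := by
  have := delay_order hn h1 h1'
  unfold CurrentBR cong prefersOne BoolCircle.reply
  rw [add_sub_cancel_right]
  cases s (i - 1) <;> cases s i <;> cases s (i + 1) <;> simp <;> omega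

theorem step_flipStep (hn : 2 ≤ n) (hreg : ∀ i, ¬ G.IsType1 i ∧ ¬ G.IsType1' i)
    {s s' : Fin n → Bool} (h : G.Step s s') :
    BoolCircle.FlipStep (G.prefersOne · 1) (G.prefersOne · 2) s s' :=
  let ⟨i, hi, hs'⟩ := h
  ⟨i, (not_currentBR_iff hn (hreg i).1 (hreg i).2 s).mp hi, hs'⟩

theorem overloadTP_iff (hn : 2 ≤ n) (hreg : ∀ i, ¬ G.IsType1 i ∧ ¬ G.IsType1' i) (i : Fin n) :
    G.OverloadTP i ↔ G.prefersOne (i - 1) 2 = true ∧ G.prefersOne i 2 = false := by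
  have := delay_order hn (hreg i).1 (hreg i).2
  have := delay_order hn (hreg (i - 1)).1 (hreg (i - 1)).2
  unfold OverloadTP IsType2 IsType2' IsType3 IsType3' prefersOne
  simp only [decide_eq_true_eq, decide_eq_false_iff_not]
  omega

theorem underloadTP_iff (hn : 2 ≤ n) (hreg : ∀ i, ¬ G.IsType1 i ∧ ¬ G.IsType1' i) (i : Fin n) :
    G.UnderloadTP i ↔ G.prefersOne (i - 1) 1 = false ∧ G.prefersOne i 1 = true := by
  have := delay_order hn (hreg i).1 (hreg i).2
  have := delay_order hn (hreg (i - 1)).1 (hreg (i - 1)).2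
  unfold UnderloadTP IsType2 IsType2' IsType3 IsType3' prefersOne
  simp only [decide_eq_true_eq, decide_eq_false_iff_not]
  omega

theorem sub_one_ne_of_overloadTP {i : Fin n} (h : G.OverloadTP i) : i - 1 ≠ i := by
  intro hi
  rw [OverloadTP, hi] at h
  unfold IsType2 IsType2' IsType3 IsType3' at h
  omega

theorem sub_one_ne_of_underloadTP {i : Fin n} (h : G.UnderloadTP i) : i - 1 ≠ i := by
  intro hi
  rw [UnderloadTP, hi] at h
  unfold IsType2 IsType2' IsType3 IsType3' at h
  omega

theorem prefersOne_const_of_one_kind (hn : 2 ≤ n) (hreg : ∀ i, ¬ G.IsType1 i ∧ ¬ G.IsType1' i)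
    (htp : ((∃ i, G.OverloadTP i) ∧ (∀ i, ¬ G.UnderloadTP i)) ∨
      ((∃ i, G.UnderloadTP i) ∧ (∀ i, ¬ G.OverloadTP i))) :
    (∃ c, (∀ i, G.prefersOne i 1 = c) ∧ ∃ i, G.prefersOne i 2 = c) ∨
      (∃ c, (∀ i, G.prefersOne i 2 = c) ∧ ∃ i, G.prefersOne i 1 = c) := by
  simp only [overloadTP_iff hn hreg, underloadTP_iff hn hreg] at htp
  rcases htp with ⟨⟨i, hi₁, hi₂⟩, hno⟩ | ⟨⟨i, hi₁, hi₂⟩, hno⟩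
  · obtain ⟨c, hc⟩ := Fin.exists_forall_eq_of_forall_sub_one_imp (x := (G.prefersOne · 1))
      (c := false) fun j hj => by simpa [hj] using hno j
    exact Or.inl ⟨c, hc, by cases c; exacts [⟨i, hi₂⟩, ⟨i - 1, hi₁⟩]⟩
  · obtain ⟨c, hc⟩ := Fin.exists_forall_eq_of_forall_sub_one_imp (x := (G.prefersOne · 2))
      (c := true) fun j hj => by simpa [hj] using hno j
    exact Or.inr ⟨c, hc, by cases c; exacts [⟨i - 1, hi₁⟩, ⟨i, hi₂⟩]⟩

end CircleGame

/-- There is a constant `C > 0` such that for every circle game with `n`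
players in which no player is of type 1 or 1' and which has termination points for
exactly one kind of token, the transition graph is acyclic and every best response
schedule terminates after at most `C·n^2` steps. -/
theorem circle_one_kind_of_termination_points :
    ∃ C : ℕ, 0 < C ∧
      ∀ (n : ℕ) [NeZero n] (G : CircleGame n),
        (∀ i, ¬ G.IsType1 i ∧ ¬ G.IsType1' i) →
        (((∃ i, G.OverloadTP i) ∧ (∀ i, ¬ G.UnderloadTP i)) ∨
          ((∃ i, G.UnderloadTP i) ∧ (∀ i, ¬ G.OverloadTP i))) →
        (∀ s : Fin n → Bool, ¬ Relation.TransGen G.Step s s) ∧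
        (∀ (L : ℕ) (f : ℕ → Fin n → Bool),
          (∀ k, k < L → G.Step (f k) (f (k + 1))) → L ≤ C * n ^ 2) := by
  refine ⟨2, two_pos, fun n _ G hreg htp => ?_⟩
  have hn : 2 ≤ n := by
    refine Fin.nontrivial_iff_two_le.mp ?_
    rcases htp with ⟨⟨i, hi⟩, -⟩ | ⟨⟨i, hi⟩, -⟩
    exacts [nontrivial_of_ne _ _ (G.sub_one_ne_of_overloadTP hi),
      nontrivial_of_ne _ _ (G.sub_one_ne_of_underloadTP hi)]
  have hpot : Relation.HasBoundedPotential G.Step (2 * n ^ 2) :=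
    (BoolCircle.hasBoundedPotential hn (G.prefersOne_const_of_one_kind hn hreg htp)).comap id
      fun _ _ => G.step_flipStep hn hreg
  exact ⟨hpot.not_transGen_self, fun _ _ hf => hpot.length_le hf⟩
end
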